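/- arXiv:2107.14393 — 6 statements merged into one kernel-verified Lean document; each statement's English description precedes it below -/
import Mathlib

section
/- For the annulus M = {z ∈ ℂ : 1/√R < |z| < √R} with R > 1, equipped with the hyperbolic (canonical Poincaré) metric of curvature −1, every closed rectifiable curve in M with nonzero winding number about the origin has length at least π²/ln R. -/
open Real

/-- The conformal density of the canonical (Poincaré, curvature `-1`) metric on the annulus
`{1/√R < |z| < √R}`: the metric is `λ(z)²·(dr² + r²dθ²)` with
`λ(z) = (π/(2 ln R)) / (|z| cos(π ln|z| / (2 ln R)))`. -/
noncomputable def annulusDensity (R : ℝ) (z : ℂ) : ℝ :=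
  (π / (2 * Real.log R)) / (‖z‖ * Real.cos (π * Real.log ‖z‖ / (2 * Real.log R)))

/-- In the annulus `M = {z : 1/√R < |z| < √R}`, `R > 1`, with its canonical hyperbolic metric,
every closed (C¹) curve with nonzero winding number about the origin has length at least
`π²/ln R`. Winding number is expressed through a continuous logarithm lift. -/
theorem annulus_length_ge_of_winding
    (R : ℝ) (hR : 1 < R)
    (M : Set ℂ) (hM : M = {z : ℂ | 1 / Real.sqrt R < ‖z‖ ∧ ‖z‖ < Real.sqrt R})
    (γ : ℝ → ℂ) (hγ : ContDiffOn ℝ 1 γ (Set.Icc 0 1))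
    (hmem : ∀ t ∈ Set.Icc (0:ℝ) 1, γ t ∈ M)
    (hclosed : γ 0 = γ 1)
    -- nonzero winding number about the origin, via a continuous lift of the logarithm:
    (ℓ : ℝ → ℂ) (hℓ : ContinuousOn ℓ (Set.Icc 0 1))
    (hlift : ∀ t ∈ Set.Icc (0:ℝ) 1, γ t = Complex.exp (ℓ t))
    (n : ℤ) (hn : n ≠ 0) (hwind : ℓ 1 - ℓ 0 = 2 * π * n * Complex.I) :
    π ^ 2 / Real.log R ≤ ∫ t in (0:ℝ)..1, annulusDensity R (γ t) * ‖deriv γ t‖ := by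
  have hπ : (0:ℝ) < π := Real.pi_pos
  have hlogR : 0 < Real.log R := Real.log_pos hR
  set c : ℝ := π / (2 * Real.log R) with hcdef
  have hcpos : 0 < c := by positivity
  have h0mem : (0:ℝ) ∈ Set.Icc (0:ℝ) 1 := by norm_num
  have h1mem : (1:ℝ) ∈ Set.Icc (0:ℝ) 1 := by norm_num
  have hann : ∀ t ∈ Set.Icc (0:ℝ) 1,
      1 / Real.sqrt R < ‖γ t‖ ∧ ‖γ t‖ < Real.sqrt R := by
    intro t ht; have := hmem t ht; rw [hM] at this; exact this
  have hRpos : (0:ℝ) < R := by linarith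
  have hsqrtpos : 0 < Real.sqrt R := Real.sqrt_pos.2 hRpos
  have habs_pos : ∀ t ∈ Set.Icc (0:ℝ) 1, 0 < ‖γ t‖ := by
    intro t ht
    have h1 := (hann t ht).1
    have : 0 < 1 / Real.sqrt R := by positivity
    linarith
  have hne : ∀ t ∈ Set.Icc (0:ℝ) 1, γ t ≠ 0 := by
    intro t ht
    simpa using (habs_pos t ht).ne'
  have hcos : ∀ t ∈ Set.Icc (0:ℝ) 1,
      0 < Real.cos (π * Real.log (‖γ t‖) / (2 * Real.log R)) := by
    intro t ht
    have h1 := (hann t ht).1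
    have h2 := (hann t ht).2
    have ha := habs_pos t ht
    have hls : Real.log (Real.sqrt R) = Real.log R / 2 := Real.log_sqrt hRpos.le
    have hub : Real.log (‖γ t‖) < Real.log R / 2 := by
      rw [← hls]; exact Real.log_lt_log ha h2
    have hlb : -(Real.log R / 2) < Real.log (‖γ t‖) := by
      have := Real.log_lt_log (by positivity : (0:ℝ) < 1 / Real.sqrt R) h1
      rw [Real.log_div one_ne_zero (by positivity), Real.log_one, hls] at this
      linarith
    apply Real.cos_pos_of_mem_Ioo
    constructor
    · rw [lt_div_iff₀ (by positivity)]
      nlinarith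
    · rw [div_lt_iff₀ (by positivity)]
      nlinarith
  -- the derivative within the interval
  set g : ℝ → ℂ := derivWithin γ (Set.Icc 0 1) with hgdef
  have hgcont : ContinuousOn g (Set.Icc 0 1) :=
    hγ.continuousOn_derivWithin (uniqueDiffOn_Icc one_pos) le_rfl
  set h : ℝ → ℂ := fun s => g s / γ s with hhdef
  have hhcont : ContinuousOn h (Set.Icc 0 1) := hgcont.div hγ.continuousOn hne
  set F : ℝ → ℂ := fun t => ∫ s in (0:ℝ)..t, h s with hFdef
  have hFInt : ∀ t ∈ Set.Icc (0:ℝ) 1, IntervalIntegrable h MeasureTheory.volume 0 t := by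
    intro t ht
    apply ContinuousOn.intervalIntegrable
    apply hhcont.mono
    rw [Set.uIcc_of_le ht.1]
    exact Set.Icc_subset_Icc le_rfl ht.2
  have hFcont : ContinuousOn F (Set.Icc 0 1) := by
    have : ContinuousOn F (Set.uIcc (0:ℝ) 1) := by
      apply intervalIntegral.continuousOn_primitive_interval
      rw [Set.uIcc_of_le zero_le_one]
      exact hhcont.integrableOn_compact isCompact_Icc
    rwa [Set.uIcc_of_le zero_le_one] at this
  have hnhds : ∀ t ∈ Set.Ico (0:ℝ) 1, Set.Icc (0:ℝ) 1 ∈ nhdsWithin t (Set.Ici t) := by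
    intro t ht
    apply mem_nhdsWithin.2
    exact ⟨Set.Iio 1, isOpen_Iio, ht.2, fun x hx => ⟨le_trans ht.1 hx.2, le_of_lt hx.1⟩⟩
  have hγd : ∀ t ∈ Set.Ico (0:ℝ) 1, HasDerivWithinAt γ (g t) (Set.Ici t) t := by
    intro t ht
    have h1 : HasDerivWithinAt γ (g t) (Set.Icc 0 1) t :=
      ((hγ.differentiableOn one_ne_zero) t (Set.Ico_subset_Icc_self ht)).hasDerivWithinAt
    exact h1.mono_of_mem_nhdsWithin (hnhds t ht)
  have hFd : ∀ t ∈ Set.Ico (0:ℝ) 1, HasDerivWithinAt F (h t) (Set.Ici t) t := by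
    intro t ht
    have htI : t ∈ Set.Icc (0:ℝ) 1 := Set.Ico_subset_Icc_self ht
    have hIoi : Set.Icc (0:ℝ) 1 ∈ nhdsWithin t (Set.Ioi t) :=
      nhdsWithin_mono t Set.Ioi_subset_Ici_self (hnhds t ht)
    refine intervalIntegral.integral_hasDerivWithinAt_right (hFInt t htI)
      ⟨Set.Icc 0 1, hIoi, ?_⟩ ?_
    · exact (hhcont.aestronglyMeasurable measurableSet_Icc)
    · exact (hhcont t htI).mono_of_mem_nhdsWithin hIoi
  -- γ t = γ 0 * exp (F t)
  have key : ∀ t ∈ Set.Icc (0:ℝ) 1, γ t * Complex.exp (-F t) = γ 0 := by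
    have hF0 : F 0 = 0 := intervalIntegral.integral_same
    apply eq_of_has_deriv_right_eq (f' := fun _ => (0:ℂ))
    · intro x hx
      have hd : HasDerivWithinAt (fun t => γ t * Complex.exp (-F t))
          (g x * Complex.exp (-F x) + γ x * (Complex.exp (-F x) * -h x)) (Set.Ici x) x :=
        (hγd x hx).mul ((hFd x hx).neg.cexp)
      have hx' : γ x ≠ 0 := hne x (Set.Ico_subset_Icc_self hx)
      have hcan : γ x * (g x / γ x) = g x := by field_simp
      convert hd using 1
      case e'_4 => rfl
      all_goals simp only [hhdef]
      all_goals linear_combination (Complex.exp (-F x)) * hcan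
    · intro x hx
      exact hasDerivWithinAt_const x _ (γ 0)
    · exact hγ.continuousOn.mul (hFcont.neg.cexp)
    · exact continuousOn_const
    · simp [hF0]
  have keyexp : ∀ t ∈ Set.Icc (0:ℝ) 1, γ t = γ 0 * Complex.exp (F t) := by
    intro t ht
    calc γ t = γ t * Complex.exp (-F t) * Complex.exp (F t) := by
          rw [mul_assoc, ← Complex.exp_add]; simp
      _ = γ 0 * Complex.exp (F t) := by rw [key t ht]
  -- the lift differs from F by a constant in 2πiℤ
  have hexpD : ∀ t ∈ Set.Icc (0:ℝ) 1, ∃ k : ℤ, ℓ t - ℓ 0 - F t = k * (2 * π * Complex.I) := by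
    intro t ht
    rw [← Complex.exp_eq_one_iff]
    have e1 : Complex.exp (ℓ t) = γ t := (hlift t ht).symm
    have e0 : Complex.exp (ℓ 0) = γ 0 := (hlift 0 h0mem).symm
    rw [Complex.exp_sub, Complex.exp_sub, e1, e0, keyexp t ht, div_div]
    exact div_self (mul_ne_zero (hne 0 h0mem) (Complex.exp_ne_zero _))
  have him : ∀ (k : ℤ), ((k : ℂ) * (2 * π * Complex.I)).im = 2 * π * k := by
    intro k
    simp [Complex.mul_im]
    ring
  -- the imaginary part of the defect
  set v : ℝ → ℝ := fun t => (ℓ t - ℓ 0 - F t).im with hvdef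
  have hvcont : ContinuousOn v (Set.Icc 0 1) :=
    Complex.continuous_im.comp_continuousOn ((hℓ.sub continuousOn_const).sub hFcont)
  have hv0 : v 0 = 0 := by
    have hF0 : F 0 = 0 := intervalIntegral.integral_same
    simp [hvdef, hF0]
  have hvval : ∀ t ∈ Set.Icc (0:ℝ) 1, ∃ k : ℤ, v t = 2 * π * k := by
    intro t ht
    obtain ⟨k, hk⟩ := hexpD t ht
    exact ⟨k, by rw [hvdef]; simp only; rw [hk, him]⟩
  have hv1 : v 1 = 0 := by
    by_contra hv1ne
    obtain ⟨k, hk⟩ := hvval 1 h1mem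
    have hkne : k ≠ 0 := by
      intro h; rw [h] at hk; simp at hk; exact hv1ne hk
    have hmid : ∃ s ∈ Set.Icc (0:ℝ) 1, v s = π ∨ v s = -π := by
      rcases lt_or_gt_of_ne hkne with hkneg | hkpos
      · have hklt : (k:ℝ) ≤ -1 := by exact_mod_cast (show k ≤ -1 by omega)
        have : v 1 ≤ -(2*π) := by rw [hk]; nlinarith
        have hsub := intermediate_value_Icc' zero_le_one hvcont
        have : -π ∈ Set.Icc (v 1) (v 0) := by
          constructor <;> [linarith; linarith [hv0, hπ]]
        obtain ⟨s, hs, hvs⟩ := hsub this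
        exact ⟨s, hs, Or.inr hvs⟩
      · have hkge : (1:ℝ) ≤ (k:ℝ) := by exact_mod_cast hkpos
        have : 2*π ≤ v 1 := by rw [hk]; nlinarith
        have hsub := intermediate_value_Icc zero_le_one hvcont
        have : π ∈ Set.Icc (v 0) (v 1) := by
          constructor <;> [linarith [hv0, hπ]; linarith]
        obtain ⟨s, hs, hvs⟩ := hsub this
        exact ⟨s, hs, Or.inl hvs⟩
    obtain ⟨s, hs, hvs⟩ := hmid
    obtain ⟨m, hm⟩ := hvval s hs
    rcases hvs with hvs | hvs
    · rw [hvs] at hm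
      have h1 : π * 1 = π * (2 * m) := by linear_combination hm
      have h2 : (1:ℝ) = 2 * m := mul_left_cancel₀ hπ.ne' h1
      have : (1:ℤ) = 2 * m := by exact_mod_cast h2
      omega
    · rw [hvs] at hm
      have h1 : π * (-1) = π * (2 * m) := by linear_combination hm
      have h2 : (-1:ℝ) = 2 * m := mul_left_cancel₀ hπ.ne' h1
      have : (-1:ℤ) = 2 * m := by exact_mod_cast h2
      omega
  -- hence F 1 = 2πn i
  have hF1 : F 1 = 2 * π * n * Complex.I := by
    obtain ⟨k, hk⟩ := hexpD 1 h1mem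
    have : (2:ℝ) * π * k = 0 := by rw [← him k, ← hk]; exact hv1
    have hk0 : (k:ℝ) = 0 := by
      rcases mul_eq_zero.1 this with h | h
      · exfalso; rcases mul_eq_zero.1 h with h' | h' <;> linarith
      · exact h
    have hk0' : k = 0 := by exact_mod_cast hk0
    rw [hk0'] at hk
    simp at hk
    rw [← hwind]
    linear_combination -hk
  -- norm of F 1
  have hnormF1 : 2 * π ≤ ‖F 1‖ := by
    rw [hF1]
    have : ‖(2 * ↑π * ↑n * Complex.I : ℂ)‖ = 2 * π * |(n:ℝ)| := by
      simp [abs_of_pos hπ, abs_mul]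
    rw [this]
    have : (1:ℝ) ≤ |(n:ℝ)| := by
      have : (1:ℤ) ≤ |n| := Int.one_le_abs (by omega)
      calc (1:ℝ) ≤ (|n| : ℤ) := by exact_mod_cast this
        _ = |(n:ℝ)| := by push_cast; simp
    nlinarith
  -- integrability facts
  have hdenscont : ContinuousOn (fun t => annulusDensity R (γ t)) (Set.Icc 0 1) := by
    unfold annulusDensity
    apply ContinuousOn.div continuousOn_const
    · exact (continuous_norm.comp_continuousOn hγ.continuousOn).mul
        (Real.continuous_cos.comp_continuousOn
          (((continuousOn_const.mul
            (Real.continuousOn_log.comp (continuous_norm.comp_continuousOn hγ.continuousOn)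
              (fun t ht => (habs_pos t ht).ne'))).div_const _)))
    · intro t ht
      exact (mul_pos (habs_pos t ht) (hcos t ht)).ne'
  have hIg : IntervalIntegrable (fun t => annulusDensity R (γ t) * ‖g t‖)
      MeasureTheory.volume 0 1 := by
    apply ContinuousOn.intervalIntegrable
    rw [Set.uIcc_of_le zero_le_one]
    exact hdenscont.mul hgcont.norm
  have hIch : IntervalIntegrable (fun t => c * ‖h t‖) MeasureTheory.volume 0 1 := by
    apply ContinuousOn.intervalIntegrable
    rw [Set.uIcc_of_le zero_le_one]
    exact continuousOn_const.mul hhcont.norm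
  -- pointwise comparison
  have hpt : ∀ t ∈ Set.Icc (0:ℝ) 1, c * ‖h t‖ ≤ annulusDensity R (γ t) * ‖g t‖ := by
    intro t ht
    have ha := habs_pos t ht
    have hc1 := hcos t ht
    have hc2 : Real.cos (π * Real.log (‖γ t‖) / (2 * Real.log R)) ≤ 1 :=
      Real.cos_le_one _
    have hgnn : (0:ℝ) ≤ ‖g t‖ := norm_nonneg _
    have hnh : ‖h t‖ = ‖g t‖ / ‖γ t‖ := by
      rw [hhdef]; simp
    unfold annulusDensity
    rw [← hcdef, hnh]
    rw [show c * (‖g t‖ / ‖γ t‖) = c * ‖g t‖ / ‖γ t‖ by ring,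
      show c / (‖γ t‖ *
          Real.cos (π * Real.log (‖γ t‖) / (2 * Real.log R))) * ‖g t‖
        = c * ‖g t‖ / (‖γ t‖ *
          Real.cos (π * Real.log (‖γ t‖) / (2 * Real.log R))) by ring]
    apply div_le_div_of_nonneg_left (by positivity) (mul_pos ha hc1)
    nlinarith
  -- replace deriv by derivWithin a.e.
  have hcongr : (∫ t in (0:ℝ)..1, annulusDensity R (γ t) * ‖deriv γ t‖)
      = ∫ t in (0:ℝ)..1, annulusDensity R (γ t) * ‖g t‖ := by
    apply intervalIntegral.integral_congr_ae
    have h1 : ∀ᵐ t : ℝ ∂MeasureTheory.volume, t ≠ 1 := by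
      rw [MeasureTheory.ae_iff]
      have : {x : ℝ | ¬ x ≠ 1} = {1} := by ext x; simp
      rw [this]
      exact MeasureTheory.measure_singleton 1
    filter_upwards [h1] with t ht htmem
    rw [Set.uIoc_of_le zero_le_one] at htmem
    have htoo : t ∈ Set.Ioo (0:ℝ) 1 := ⟨htmem.1, lt_of_le_of_ne htmem.2 ht⟩
    have : g t = deriv γ t :=
      derivWithin_of_mem_nhds (Icc_mem_nhds htoo.1 htoo.2)
    rw [this]
  rw [hcongr]
  -- chain of inequalities
  have step2 : ‖F 1‖ ≤ ∫ t in (0:ℝ)..1, ‖h t‖ :=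
    intervalIntegral.norm_integral_le_integral_norm zero_le_one
  have step3 : (∫ t in (0:ℝ)..1, c * ‖h t‖) ≤ ∫ t in (0:ℝ)..1, annulusDensity R (γ t) * ‖g t‖ :=
    intervalIntegral.integral_mono_on zero_le_one hIch hIg hpt
  have step1 : c * (2 * π) ≤ ∫ t in (0:ℝ)..1, c * ‖h t‖ := by
    rw [intervalIntegral.integral_const_mul]
    have := mul_le_mul_of_nonneg_left (le_trans hnormF1 step2) hcpos.le
    linarith [mul_le_mul_of_nonneg_left hnormF1 hcpos.le,
      mul_le_mul_of_nonneg_left step2 hcpos.le]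
  have hfinal : π ^ 2 / Real.log R = c * (2 * π) := by
    rw [hcdef]; field_simp
  linarith
end

section
/- Let Ω₁ ⊂⊂ Ω₂ be bounded domains in ℂⁿ (the closure of Ω₁ is compact and contained in Ω₂). Then for every compact subset K of Ω₁ there exists a constant c_K with 0 < c_K < 1 such that F_{Ω₂}^Kob(p, v) ≤ c_K · F_{Ω₁}^Kob(p, v) for all p ∈ K and all v ∈ ℂⁿ. -/
open Metric Set

/-- The Kobayashi–Royden infinitesimal metric of an open set `U ⊆ ℂⁿ`:
`F_U^Kob(p,v) = inf { r > 0 : ∃ holomorphic f : Δ → U, f(0) = p, f'(0) = v/r }`,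
where `Δ` is the open unit disc in `ℂ`. -/
noncomputable def kobRoyden {n : ℕ} (U : Set (EuclideanSpace ℂ (Fin n)))
    (p v : EuclideanSpace ℂ (Fin n)) : ℝ :=
  sInf {r : ℝ | 0 < r ∧ ∃ f : ℂ → EuclideanSpace ℂ (Fin n),
    DifferentiableOn ℂ f (Metric.ball 0 1) ∧ Set.MapsTo f (Metric.ball 0 1) U ∧
    f 0 = p ∧ deriv f 0 = r⁻¹ • v}

/-- If `Ω₁ ⊂⊂ Ω₂` are bounded domains in `ℂⁿ`, then for every compact `K ⊆ Ω₁` there is a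
constant `0 < c_K < 1` with `F_{Ω₂}^Kob(p,v) ≤ c_K · F_{Ω₁}^Kob(p,v)` on `K × ℂⁿ`. -/
theorem kobRoyden_strict_comparison {n : ℕ}
    (Ω₁ Ω₂ : Set (EuclideanSpace ℂ (Fin n)))
    (h₁o : IsOpen Ω₁) (h₁c : IsConnected Ω₁) (h₁b : Bornology.IsBounded Ω₁)
    (h₂o : IsOpen Ω₂) (h₂c : IsConnected Ω₂) (h₂b : Bornology.IsBounded Ω₂)
    (hcl : closure Ω₁ ⊆ Ω₂)
    (K : Set (EuclideanSpace ℂ (Fin n))) (hK : IsCompact K) (hKΩ : K ⊆ Ω₁) :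
    ∃ c : ℝ, 0 < c ∧ c < 1 ∧
      ∀ p ∈ K, ∀ v : EuclideanSpace ℂ (Fin n),
        kobRoyden Ω₂ p v ≤ c * kobRoyden Ω₁ p v := by
  -- choose a thickening parameter δ
  obtain ⟨δ, hδ0, hδ⟩ := (h₁b.isCompact_closure).exists_thickening_subset_open h₂o hcl
  -- choose a bound M for Ω₁
  obtain ⟨M, hM0, hM⟩ := h₁b.subset_ball_lt 0 0
  set c : ℝ := (1 + δ / (2 * M))⁻¹ with hc
  have hd2M : 0 < δ / (2 * M) := div_pos hδ0 (by linarith)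
  have hc0 : 0 < c := inv_pos.2 (by linarith)
  have hc1 : c < 1 := by
    rw [hc, inv_lt_one_iff₀]; right; linarith
  refine ⟨c, hc0, hc1, fun p hp v => ?_⟩
  have hpΩ₁ : p ∈ Ω₁ := hKΩ hp
  have hpΩ₂ : p ∈ Ω₂ := hcl (subset_closure hpΩ₁)
  set S₁ := {r : ℝ | 0 < r ∧ ∃ f : ℂ → EuclideanSpace ℂ (Fin n),
    DifferentiableOn ℂ f (Metric.ball 0 1) ∧ Set.MapsTo f (Metric.ball 0 1) Ω₁ ∧
    f 0 = p ∧ deriv f 0 = r⁻¹ • v} with hS₁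
  set S₂ := {r : ℝ | 0 < r ∧ ∃ f : ℂ → EuclideanSpace ℂ (Fin n),
    DifferentiableOn ℂ f (Metric.ball 0 1) ∧ Set.MapsTo f (Metric.ball 0 1) Ω₂ ∧
    f 0 = p ∧ deriv f 0 = r⁻¹ • v} with hS₂
  have hbdd₂ : BddBelow S₂ := ⟨0, fun x hx => hx.1.le⟩
  -- S₁ is nonempty
  have hne₁ : S₁.Nonempty := by
    rcases eq_or_ne v 0 with rfl | hv
    · refine ⟨1, one_pos, fun _ => p, differentiableOn_const _, fun z _ => hpΩ₁, rfl, by simp⟩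
    · obtain ⟨ρ, hρ0, hρ⟩ := Metric.isOpen_iff.1 h₁o p hpΩ₁
      have hv0 : (0:ℝ) < ‖v‖ := norm_pos_iff.2 hv
      refine ⟨2 * ‖v‖ / ρ, by positivity, fun z => p + z • ((2 * ‖v‖ / ρ)⁻¹ • v), ?_, ?_, by simp, ?_⟩
      · exact (differentiableOn_const _).add ((differentiable_id.smul_const _).differentiableOn)
      · intro z hz
        apply hρ
        simp only [mem_ball, dist_eq_norm, add_sub_cancel_left, mem_ball, dist_zero_right, sub_zero] at hz ⊢
        rw [norm_smul, norm_smul, norm_inv]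
        have : ‖(2 * ‖v‖ / ρ : ℝ)‖ = 2 * ‖v‖ / ρ := by
          rw [Real.norm_eq_abs, abs_of_pos (by positivity)]
        rw [this]
        calc ‖z‖ * ((2 * ‖v‖ / ρ)⁻¹ * ‖v‖) ≤ 1 * ((2 * ‖v‖ / ρ)⁻¹ * ‖v‖) := by
              apply mul_le_mul_of_nonneg_right hz.le (by positivity)
          _ = ρ / 2 := by field_simp
          _ < ρ := by linarith
      · have h1 : HasDerivAt (fun z : ℂ => p + z • ((2 * ‖v‖ / ρ)⁻¹ • v))
            ((0 : EuclideanSpace ℂ (Fin n)) + (1:ℂ) • ((2 * ‖v‖ / ρ)⁻¹ • v)) 0 :=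
          (hasDerivAt_const _ _).add ((hasDerivAt_id (0:ℂ)).smul_const _)
        simpa using h1.deriv
  -- key step: every competitor for Ω₁ yields a better one for Ω₂
  have key : ∀ r ∈ S₁, kobRoyden Ω₂ p v ≤ c * r := by
    rintro r ⟨hr0, f, hf, hmaps, hf0, hf'⟩
    rcases eq_or_ne v 0 with rfl | hv
    · apply csInf_le hbdd₂
      exact ⟨mul_pos hc0 hr0, fun _ => p, differentiableOn_const _, fun z _ => hpΩ₂, rfl, by simp⟩
    · have hv0 : (0:ℝ) < ‖v‖ := norm_pos_iff.2 hv
      -- Schwarz bound: ‖deriv f 0‖ ≤ 2M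
      have hmaps' : MapsTo f (ball 0 1) (ball (f 0) (2 * M)) := by
        intro z hz
        have h1 : f z ∈ Ω₁ := hmaps hz
        rw [mem_ball, dist_eq_norm, hf0]
        calc ‖f z - p‖ ≤ ‖f z‖ + ‖p‖ := norm_sub_le _ _
          _ < M + M := by
              have := hM h1; have := hM hpΩ₁
              simp only [mem_ball, dist_zero_right] at *
              linarith
          _ = 2 * M := by ring
      have hschwarz : ‖deriv f 0‖ ≤ 2 * M := by
        have := Complex.norm_deriv_le_div_of_mapsTo_ball hf (hmaps'.mono_right ball_subset_closedBall) one_pos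
        simpa using this
      have hnd : ‖v‖ / r ≤ 2 * M := by
        rw [hf'] at hschwarz
        rw [norm_smul, Real.norm_eq_abs, abs_of_pos (inv_pos.2 hr0)] at hschwarz
        rw [div_le_iff₀ hr0]; rw [inv_mul_le_iff₀ hr0] at hschwarz; linarith [hschwarz]
      -- new competitor for Ω₂
      set s : ℝ := (r⁻¹ + δ / ‖v‖)⁻¹ with hs
      have hsum : 0 < r⁻¹ + δ / ‖v‖ := by positivity
      have hs0 : 0 < s := inv_pos.2 hsum
      have hmem : s ∈ S₂ := by
        refine ⟨hs0, fun z => f z + z • ((δ / ‖v‖ : ℝ) • v), ?_, ?_, by simpa using hf0, ?_⟩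
        · exact hf.add ((differentiable_id.smul_const _).differentiableOn)
        · intro z hz
          apply hδ
          rw [Metric.mem_thickening_iff]
          refine ⟨f z, subset_closure (hmaps hz), ?_⟩
          rw [dist_eq_norm, add_sub_cancel_left, norm_smul, norm_smul, Real.norm_eq_abs,
            abs_of_pos (by positivity : (0:ℝ) < δ / ‖v‖)]
          have hz1 : ‖z‖ < 1 := by simpa [dist_zero_right] using hz
          calc ‖z‖ * (δ / ‖v‖ * ‖v‖) < 1 * (δ / ‖v‖ * ‖v‖) := by
                apply mul_lt_mul_of_pos_right hz1 (by positivity)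
            _ = δ := by field_simp
        · have hfd : HasDerivAt f (deriv f 0) 0 := by
            have : DifferentiableAt ℂ f 0 :=
              hf.differentiableAt (Metric.isOpen_ball.mem_nhds (by simp))
            exact this.hasDerivAt
          have h1 : HasDerivAt (fun z : ℂ => f z + z • ((δ / ‖v‖ : ℝ) • v))
              (deriv f 0 + (1:ℂ) • ((δ / ‖v‖ : ℝ) • v)) 0 :=
            hfd.add ((hasDerivAt_id (0:ℂ)).smul_const _)
          rw [h1.deriv, hf', one_smul, hs, inv_inv, add_smul]
      have h1 : kobRoyden Ω₂ p v ≤ s := csInf_le hbdd₂ hmem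
      refine h1.trans ?_
      -- s ≤ c * r
      rw [hs, hc]
      have hMpos : (0:ℝ) < 2 * M := by linarith
      have h3 : ‖v‖ ≤ r * (2 * M) := by
        rw [div_le_iff₀ hr0] at hnd; linarith
      have h2 : δ / (2 * M) ≤ r * (δ / ‖v‖) := by
        rw [div_le_iff₀ hMpos]
        calc δ = (δ / ‖v‖) * ‖v‖ := by field_simp
          _ ≤ (δ / ‖v‖) * (r * (2 * M)) := by
              apply mul_le_mul_of_nonneg_left h3 (by positivity)
          _ = r * (δ / ‖v‖) * (2 * M) := by ring
      have h2' : (δ / (2 * M)) * r⁻¹ ≤ δ / ‖v‖ := by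
        calc (δ / (2 * M)) * r⁻¹ ≤ (r * (δ / ‖v‖)) * r⁻¹ := by
              apply mul_le_mul_of_nonneg_right h2 (by positivity)
          _ = δ / ‖v‖ := by field_simp
      have hstep : (1 + δ / (2 * M)) * r⁻¹ ≤ r⁻¹ + δ / ‖v‖ := by
        calc (1 + δ / (2 * M)) * r⁻¹ = r⁻¹ + (δ / (2 * M)) * r⁻¹ := by ring
          _ ≤ r⁻¹ + δ / ‖v‖ := by linarith
      calc (r⁻¹ + δ / ‖v‖)⁻¹ ≤ ((1 + δ / (2 * M)) * r⁻¹)⁻¹ :=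
            inv_anti₀ (by positivity) hstep
        _ = (1 + δ / (2 * M))⁻¹ * r := by rw [mul_inv, inv_inv]
  -- conclude via the infimum
  have h1 : kobRoyden Ω₂ p v / c ≤ sInf S₁ := by
    apply le_csInf hne₁
    intro r hr
    rw [div_le_iff₀ hc0]
    calc kobRoyden Ω₂ p v ≤ c * r := key r hr
      _ = r * c := mul_comm _ _
  rw [div_le_iff₀ hc0] at h1
  calc kobRoyden Ω₂ p v ≤ sInf S₁ * c := h1
    _ = c * kobRoyden Ω₁ p v := by rw [mul_comm]; rfl
end

section
/- Let U, V be bounded open sets in ℂⁿ with the closure of U contained in V. Then there exists a constant c ∈ (0,1) such that F_V^Kob(p, v) ≤ c · F_U^Kob(p, v) for all p ∈ U and all v ∈ ℂⁿ. -/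
/-- If `U, V` are bounded open sets in `ℂⁿ` with `cl(U) ⊆ V`, then there is a constant
`c ∈ (0,1)` such that `F_V^Kob(p,v) ≤ c·F_U^Kob(p,v)` for all `p ∈ U`, `v ∈ ℂⁿ`. -/
theorem kobRoyden_strict_comparison_global {n : ℕ}
    (U V : Set (EuclideanSpace ℂ (Fin n)))
    (hUo : IsOpen U) (hUb : Bornology.IsBounded U)
    (hVo : IsOpen V) (hVb : Bornology.IsBounded V)
    (hcl : closure U ⊆ V) :
    ∃ c : ℝ, 0 < c ∧ c < 1 ∧
      ∀ p ∈ U, ∀ v : EuclideanSpace ℂ (Fin n),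
        kobRoyden V p v ≤ c * kobRoyden U p v := by
  classical
  obtain ⟨R, hR⟩ := hUb.subset_closedBall 0
  set M : ℝ := 2 * max R 0 + 1 with hMdef
  have hMpos : 0 < M := by positivity
  obtain ⟨ε, hε, hthick⟩ :=
    hUb.isCompact_closure.exists_thickening_subset_open hVo hcl
  set δ : ℝ := ε / (2 * M) with hδdef
  have hδ : 0 < δ := by positivity
  refine ⟨1 / (1 + δ), by positivity, ?_, ?_⟩
  · rw [div_lt_one (by positivity)]; linarith
  intro p hp v
  set SU := {r : ℝ | 0 < r ∧ ∃ f : ℂ → EuclideanSpace ℂ (Fin n),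
    DifferentiableOn ℂ f (Metric.ball 0 1) ∧ Set.MapsTo f (Metric.ball 0 1) U ∧
    f 0 = p ∧ deriv f 0 = r⁻¹ • v} with hSUdef
  set SV := {r : ℝ | 0 < r ∧ ∃ f : ℂ → EuclideanSpace ℂ (Fin n),
    DifferentiableOn ℂ f (Metric.ball 0 1) ∧ Set.MapsTo f (Metric.ball 0 1) V ∧
    f 0 = p ∧ deriv f 0 = r⁻¹ • v} with hSVdef
  have hbddU : BddBelow SU := ⟨0, fun r hr => hr.1.le⟩
  have hbddV : BddBelow SV := ⟨0, fun r hr => hr.1.le⟩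
  -- SU is nonempty
  obtain ⟨s, hs, hball⟩ := Metric.isOpen_iff.1 hUo p hp
  have hSUne : SU.Nonempty := by
    set r₀ : ℝ := (‖v‖ + 1) / s with hr₀def
    have hr₀ : 0 < r₀ := by positivity
    set w : EuclideanSpace ℂ (Fin n) := r₀⁻¹ • v with hwdef
    have hw : ‖w‖ < s := by
      rw [hwdef, norm_smul, norm_inv, Real.norm_eq_abs, abs_of_pos hr₀, hr₀def]
      rw [inv_div, div_mul_eq_mul_div, div_lt_iff₀ (by positivity)]
      nlinarith [norm_nonneg v]
    refine ⟨r₀, hr₀, fun z => p + z • w, ?_, ?_, by simp, ?_⟩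
    · intro z _
      exact (differentiableAt_id.smul_const w).const_add p |>.differentiableWithinAt
    · intro z hz
      apply hball
      simp only [Metric.mem_ball, dist_eq_norm, add_sub_cancel_left, norm_smul]
      calc ‖z‖ * ‖w‖ ≤ 1 * ‖w‖ := by
            apply mul_le_mul_of_nonneg_right (le_of_lt ?_) (norm_nonneg w)
            simpa [Metric.mem_ball, dist_eq_norm] using hz
        _ < s := by simpa using hw
    · have : HasDerivAt (fun z : ℂ => p + z • w) ((1 : ℂ) • w) 0 :=
        ((hasDerivAt_id (0 : ℂ)).smul_const w).const_add p
      simpa using this.deriv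
  -- main step: scaling
  have hkey : ∀ r ∈ SU, r / (1 + δ) ∈ SV := by
    rintro r ⟨hr, f, hfd, hfm, hf0, hfder⟩
    have h0mem : (0 : ℂ) ∈ Metric.ball (0 : ℂ) 1 := Metric.mem_ball_self one_pos
    have hnormU : ∀ x ∈ U, ‖x‖ ≤ max R 0 :=
      fun x hx => le_max_of_le_left (mem_closedBall_zero_iff.1 (hR hx))
    have hmaps2 : Set.MapsTo f (Metric.ball 0 1) (Metric.ball (f 0) M) := by
      intro z hz
      rw [Metric.mem_ball, dist_eq_norm]
      calc ‖f z - f 0‖ ≤ ‖f z‖ + ‖f 0‖ := norm_sub_le _ _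
        _ ≤ max R 0 + max R 0 := add_le_add (hnormU _ (hfm hz)) (hnormU _ (hfm h0mem))
        _ < M := by rw [hMdef]; linarith
    have hDbound : ‖deriv f 0‖ ≤ M := by
      have := Complex.norm_deriv_le_div_of_mapsTo_ball hfd (hmaps2.mono_right Metric.ball_subset_closedBall) one_pos
      simpa using this
    set w : EuclideanSpace ℂ (Fin n) := deriv f 0 with hwdef
    set g : ℂ → EuclideanSpace ℂ (Fin n) := fun z => f z + ((δ : ℂ) * z) • w with hgdef
    have hfd0 : DifferentiableAt ℂ f 0 :=
      hfd.differentiableAt (Metric.isOpen_ball.mem_nhds h0mem)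
    have hgder : HasDerivAt g (w + (δ : ℂ) • w) 0 := by
      have h2 : HasDerivAt (fun z : ℂ => ((δ : ℂ) * z) • w) (((δ : ℂ) * 1) • w) 0 :=
        ((hasDerivAt_id (0 : ℂ)).const_mul (δ : ℂ)).smul_const w
      have h3 := hfd0.hasDerivAt.add h2
      rw [mul_one] at h3
      exact h3
    refine ⟨by positivity, g, ?_, ?_, ?_, ?_⟩
    · intro z hz
      refine DifferentiableWithinAt.add (hfd z hz) ?_
      exact ((differentiableAt_id.const_mul (δ : ℂ)).smul_const w).differentiableWithinAt
    · intro z hz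
      apply hthick
      rw [Metric.mem_thickening_iff]
      refine ⟨f z, subset_closure (hfm hz), ?_⟩
      rw [hgdef]
      simp only [dist_eq_norm, add_sub_cancel_left, norm_smul, norm_mul]
      have hz1 : ‖z‖ < 1 := by simpa [Metric.mem_ball, dist_eq_norm] using hz
      have h1 : ‖(δ : ℂ)‖ = δ := by
        simp [Complex.norm_real, abs_of_pos hδ]
      calc ‖(δ : ℂ)‖ * ‖z‖ * ‖w‖ ≤ δ * 1 * M := by
            rw [h1]
            apply mul_le_mul (mul_le_mul_of_nonneg_left hz1.le hδ.le) hDbound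
              (norm_nonneg w) (by positivity)
        _ = ε / 2 := by rw [hδdef]; field_simp
        _ < ε := by linarith
    · rw [hgdef]; simp [hf0]
    · rw [hgder.deriv, hfder, Complex.coe_smul]
      match_scalars
      field_simp
  -- conclude
  have hVle : ∀ r ∈ SU, kobRoyden V p v ≤ r / (1 + δ) := by
    intro r hr
    exact csInf_le hbddV (hkey r hr)
  have hmain : kobRoyden V p v * (1 + δ) ≤ sInf SU := by
    apply le_csInf hSUne
    intro r hr
    have := hVle r hr
    rw [le_div_iff₀ (by positivity)] at this
    linarith
  have hfin : kobRoyden V p v ≤ sInf SU / (1 + δ) := by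
    rw [le_div_iff₀ (by positivity)]
    exact hmain
  calc kobRoyden V p v ≤ sInf SU / (1 + δ) := hfin
    _ = 1 / (1 + δ) * kobRoyden U p v := by rw [kobRoyden]; ring
end

section
/- Let Ω₁ ⊂⊂ Ω₂ be bounded domains in ℂⁿ, let δ > 0 be such that the Euclidean distance from Ω₁ to ℂⁿ∖Ω₂ is at least δ, and suppose b > 0 satisfies F_{Ω₁}^Kob(p, v) ≥ b for all unit vectors v and all p ∈ Ω₁. Then F_{Ω₂}^Kob(p, v) ≤ (1/(1 + δb)) · F_{Ω₁}^Kob(p, v) for all p ∈ Ω₁ and all v ∈ ℂⁿ. -/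
/-- If `Ω₁ ⊂⊂ Ω₂` are bounded domains in `ℂⁿ`, `δ > 0` is at most the Euclidean distance
from `Ω₁` to `ℂⁿ∖Ω₂`, and `b > 0` is a lower bound for `F_{Ω₁}^Kob(p,v)` over unit vectors
`v` and `p ∈ Ω₁`, then `F_{Ω₂}^Kob(p,v) ≤ (1/(1+δb))·F_{Ω₁}^Kob(p,v)` on `Ω₁ × ℂⁿ`. -/
theorem kobRoyden_quantitative_comparison {n : ℕ}
    (Ω₁ Ω₂ : Set (EuclideanSpace ℂ (Fin n)))
    (h₁o : IsOpen Ω₁) (h₁c : IsConnected Ω₁) (h₁b : Bornology.IsBounded Ω₁)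
    (h₂o : IsOpen Ω₂) (h₂c : IsConnected Ω₂) (h₂b : Bornology.IsBounded Ω₂)
    (hsub : Ω₁ ⊆ Ω₂) (hclcompact : IsCompact (closure Ω₁)) (hcl : closure Ω₁ ⊆ Ω₂)
    (δ : ℝ) (hδ : 0 < δ)
    (hdist : ∀ x ∈ Ω₁, ∀ y ∉ Ω₂, δ ≤ dist x y)
    (b : ℝ) (hb : 0 < b)
    (hlower : ∀ p ∈ Ω₁, ∀ v : EuclideanSpace ℂ (Fin n), ‖v‖ = 1 → b ≤ kobRoyden Ω₁ p v) :
    ∀ p ∈ Ω₁, ∀ v : EuclideanSpace ℂ (Fin n),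
      kobRoyden Ω₂ p v ≤ (1 / (1 + δ * b)) * kobRoyden Ω₁ p v := by
  intro p hp v
  have h0ball : (0 : ℂ) ∈ Metric.ball (0 : ℂ) 1 := by simp
  have hK : (0 : ℝ) < 1 + δ * b := by positivity
  set S₁ := {r : ℝ | 0 < r ∧ ∃ f : ℂ → EuclideanSpace ℂ (Fin n),
    DifferentiableOn ℂ f (Metric.ball 0 1) ∧ Set.MapsTo f (Metric.ball 0 1) Ω₁ ∧
    f 0 = p ∧ deriv f 0 = r⁻¹ • v} with hS₁def
  set S₂ := {r : ℝ | 0 < r ∧ ∃ f : ℂ → EuclideanSpace ℂ (Fin n),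
    DifferentiableOn ℂ f (Metric.ball 0 1) ∧ Set.MapsTo f (Metric.ball 0 1) Ω₂ ∧
    f 0 = p ∧ deriv f 0 = r⁻¹ • v} with hS₂def
  have hbd₁ : BddBelow S₁ := ⟨0, fun x hx => le_of_lt hx.1⟩
  have hbd₂ : BddBelow S₂ := ⟨0, fun x hx => le_of_lt hx.1⟩
  by_cases hv : v = 0
  · subst hv
    have hconst : ∀ (U : Set (EuclideanSpace ℂ (Fin n))), p ∈ U →
        {r : ℝ | 0 < r ∧ ∃ f : ℂ → EuclideanSpace ℂ (Fin n),
          DifferentiableOn ℂ f (Metric.ball 0 1) ∧ Set.MapsTo f (Metric.ball 0 1) U ∧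
          f 0 = p ∧ deriv f 0 = r⁻¹ • (0 : EuclideanSpace ℂ (Fin n))} = Set.Ioi 0 := by
      intro U hpU
      ext r
      constructor
      · intro hr; exact hr.1
      · intro hr
        refine ⟨hr, fun _ => p, differentiableOn_const p, fun z _ => hpU, rfl, ?_⟩
        simp
    show sInf S₂ ≤ (1 / (1 + δ * b)) * sInf S₁
    rw [hS₁def, hS₂def, hconst Ω₁ hp, hconst Ω₂ (hsub hp), csInf_Ioi]
    simp
  · have hvn : (0 : ℝ) < ‖v‖ := norm_pos_iff.mpr hv
    set u : EuclideanSpace ℂ (Fin n) := ‖v‖⁻¹ • v with hu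
    have hun : ‖u‖ = 1 := by
      rw [hu, norm_smul, Real.norm_eq_abs, abs_of_nonneg (inv_nonneg.mpr hvn.le)]
      field_simp
    -- key lower bound: every admissible r for Ω₁ satisfies b * ‖v‖ ≤ r
    have hkeyA : ∀ r ∈ S₁, b * ‖v‖ ≤ r := by
      rintro r ⟨hrpos, f, hf, hmap, hf0, hder⟩
      have hmem : r / ‖v‖ ∈ {s : ℝ | 0 < s ∧ ∃ f : ℂ → EuclideanSpace ℂ (Fin n),
          DifferentiableOn ℂ f (Metric.ball 0 1) ∧ Set.MapsTo f (Metric.ball 0 1) Ω₁ ∧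
          f 0 = p ∧ deriv f 0 = s⁻¹ • u} := by
        refine ⟨div_pos hrpos hvn, f, hf, hmap, hf0, ?_⟩
        rw [hder, hu, smul_smul]
        congr 1
        field_simp
      have hle : kobRoyden Ω₁ p u ≤ r / ‖v‖ :=
        csInf_le ⟨0, fun x hx => le_of_lt hx.1⟩ hmem
      have hbl : b ≤ r / ‖v‖ := le_trans (hlower p hp u hun) hle
      calc b * ‖v‖ ≤ (r / ‖v‖) * ‖v‖ := by nlinarith
        _ = r := by field_simp
    -- main estimate: for each admissible r for Ω₁, sInf S₂ ≤ r / (1 + δb)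
    have hkey : ∀ r ∈ S₁, (1 + δ * b) * sInf S₂ ≤ r := by
      rintro r hrS
      obtain ⟨hrpos, f, hf, hmap, hf0, hder⟩ := hrS
      set w : EuclideanSpace ℂ (Fin n) := δ • u with hw
      set g : ℂ → EuclideanSpace ℂ (Fin n) := fun z => f z + z • w with hg
      set r' : ℝ := (r⁻¹ + δ * ‖v‖⁻¹)⁻¹ with hr'
      have hr'pos : 0 < r' := by positivity
      have hgd : DifferentiableOn ℂ g (Metric.ball 0 1) :=
        hf.add ((differentiable_id.smul_const w).differentiableOn)
      have hgmap : Set.MapsTo g (Metric.ball 0 1) Ω₂ := by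
        intro z hz
        by_contra hzo
        have hd := hdist (f z) (hmap hz) (g z) hzo
        have : dist (f z) (g z) = ‖z‖ * δ := by
          rw [dist_eq_norm, hg]
          simp only [add_sub_cancel_left]  -- f z - (f z + z • w)
          rw [show f z - (f z + z • w) = -(z • w) by abel, norm_neg, norm_smul, hw,
            norm_smul, hun, Real.norm_eq_abs, abs_of_pos hδ]
          ring
        rw [this] at hd
        have hz1 : ‖z‖ < 1 := by simpa using hz
        nlinarith
      have hg0 : g 0 = p := by simp [hg, hf0]
      have hfd : DifferentiableAt ℂ f 0 :=
        (hf.differentiableAt (Metric.isOpen_ball.mem_nhds h0ball))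
      have hgw : HasDerivAt (fun z : ℂ => z • w) w 0 := by
        simpa using (hasDerivAt_id (0 : ℂ)).smul_const w
      have hgder : deriv g 0 = r'⁻¹ • v := by
        have : deriv (fun z => f z + z • w) 0 = deriv f 0 + w := (hfd.hasDerivAt.add hgw).deriv
        rw [hg, this, hder, hr', inv_inv, hw, hu, smul_smul, add_smul]
      have hmem₂ : r' ∈ S₂ := ⟨hr'pos, g, hgd, hgmap, hg0, hgder⟩
      have hle₂ : sInf S₂ ≤ r' := csInf_le hbd₂ hmem₂
      -- r' ≤ r / (1 + δ b)
      have hA : b * ‖v‖ ≤ r := hkeyA r ⟨hrpos, f, hf, hmap, hf0, hder⟩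
      have hbr : b / r ≤ ‖v‖⁻¹ := by
        rw [div_le_iff₀ hrpos, mul_comm]
        calc b ≤ r / ‖v‖ := (le_div_iff₀ hvn).mpr hA
          _ = r * ‖v‖⁻¹ := div_eq_mul_inv r _
      have hr'le : r' ≤ r / (1 + δ * b) := by
        rw [hr']
        rw [show r / (1 + δ * b) = ((1 + δ * b) / r)⁻¹ from (inv_div _ _).symm]
        apply inv_anti₀ (by positivity)
        rw [add_div]
        have : δ * b / r ≤ δ * ‖v‖⁻¹ := by
          rw [mul_div_assoc]
          exact mul_le_mul_of_nonneg_left hbr hδ.le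
        calc 1 / r + δ * b / r ≤ r⁻¹ + δ * ‖v‖⁻¹ := by rw [one_div]; linarith
          _ = r⁻¹ + δ * ‖v‖⁻¹ := rfl
      have : sInf S₂ ≤ r / (1 + δ * b) := le_trans hle₂ hr'le
      rw [le_div_iff₀ hK] at this
      linarith [this]
    -- nonemptiness of S₁
    have hS₁ne : S₁.Nonempty := by
      obtain ⟨ε, hε, hball⟩ := Metric.isOpen_iff.mp h₁o p hp
      refine ⟨‖v‖ / ε, div_pos hvn hε, fun z => p + z • (ε • u), ?_, ?_, by simp, ?_⟩
      · exact (differentiableOn_const p).add ((differentiable_id.smul_const (ε • u)).differentiableOn)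
      · intro z hz
        apply hball
        have hz1 : ‖z‖ < 1 := by simpa using hz
        simp only [Metric.mem_ball, dist_eq_norm]
        rw [show p + z • (ε • u) - p = z • (ε • u) by abel, norm_smul, norm_smul, hun,
          Real.norm_eq_abs, abs_of_pos hε]
        nlinarith
      · have h1 : HasDerivAt (fun z : ℂ => p + z • (ε • u)) (ε • u) 0 := by
          simpa using ((hasDerivAt_id (0 : ℂ)).smul_const (ε • u)).const_add p
        rw [h1.deriv, hu, smul_smul]
        congr 1
        field_simp
    have hfin : (1 + δ * b) * sInf S₂ ≤ sInf S₁ := le_csInf hS₁ne hkey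
    show sInf S₂ ≤ (1 / (1 + δ * b)) * sInf S₁
    rw [div_mul_eq_mul_div, one_mul, le_div_iff₀ hK]
    linarith
end

section
/- Let U be a bounded domain in ℂⁿ and f : U → U a holomorphic map such that f(U) is contained in a compact subset of U. Then there is a unique point z₀ ∈ U with f(z₀) = z₀, and the iterates fⁿ converge uniformly on U to the constant map z₀. -/
open Metric MeasureTheory Set
open scoped ENNReal NNReal

noncomputable section EH

variable {n : ℕ}

local notation "E" => EuclideanSpace ℂ (Fin n)

/-- Holomorphic maps `U → 𝔻`. -/
def ehS (U : Set E) : Set (E → ℂ) :=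
  {g | DifferentiableOn ℂ g U ∧ ∀ z ∈ U, ‖g z‖ < 1}

/-- Infinitesimal Carathéodory gauge. -/
def alph (U : Set E) (z v : E) : ℝ≥0∞ :=
  ⨆ g ∈ ehS U, (‖fderiv ℂ g z v‖₊ : ℝ≥0∞)

lemma mobius_den_ne {a w : ℂ} (ha : ‖a‖ < 1) (hw : ‖w‖ < 1) :
    1 - (starRingEnd ℂ) a * w ≠ 0 := by
  intro h
  have h0 : ‖(starRingEnd ℂ) a * w‖ < 1 := by
    rw [norm_mul, RCLike.norm_conj]
    nlinarith [norm_nonneg a, norm_nonneg w]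
  have h1 : (starRingEnd ℂ) a * w = 1 := by linear_combination -h
  rw [h1] at h0; simp at h0

lemma mobius_normSq_identity (a w : ℂ) :
    Complex.normSq (1 - (starRingEnd ℂ) a * w) - Complex.normSq (w - a)
      = (1 - Complex.normSq a) * (1 - Complex.normSq w) := by
  simp only [Complex.normSq_apply, Complex.sub_re, Complex.sub_im, Complex.mul_re,
    Complex.mul_im, Complex.one_re, Complex.one_im, Complex.conj_re, Complex.conj_im]
  ring

lemma normSq_lt_one_iff {a : ℂ} : Complex.normSq a < 1 ↔ ‖a‖ < 1 := by
  rw [← Complex.sq_norm]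
  constructor
  · intro h; nlinarith [norm_nonneg a]
  · intro h; nlinarith [norm_nonneg a]

lemma mobius_norm_lt {a w : ℂ} (ha : ‖a‖ < 1) (hw : ‖w‖ < 1) :
    ‖(w - a) / (1 - (starRingEnd ℂ) a * w)‖ < 1 := by
  have hd := mobius_den_ne ha hw
  have hid := mobius_normSq_identity a w
  have hP : 0 < (1 - Complex.normSq a) * (1 - Complex.normSq w) := by
    have h1 : Complex.normSq a < 1 := normSq_lt_one_iff.2 ha
    have h2 : Complex.normSq w < 1 := normSq_lt_one_iff.2 hw
    nlinarith
  have hlt : Complex.normSq (w - a) < Complex.normSq (1 - (starRingEnd ℂ) a * w) := by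
    nlinarith
  have hnormlt : ‖w - a‖ < ‖1 - (starRingEnd ℂ) a * w‖ := by
    rw [Complex.norm_def, Complex.norm_def]
    exact Real.sqrt_lt_sqrt (Complex.normSq_nonneg _) hlt
  rw [norm_div, div_lt_one]
  · exact hnormlt
  · exact lt_of_le_of_lt (norm_nonneg _) hnormlt

lemma mobius_differentiableAt {a w : ℂ} (ha : ‖a‖ < 1) (hw : ‖w‖ < 1) :
    DifferentiableAt ℂ (fun x => (x - a) / (1 - (starRingEnd ℂ) a * x)) w := by
  exact ((differentiableAt_id.sub_const a)).div
    ((differentiableAt_const _).sub ((differentiableAt_id.const_mul _)))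
    (mobius_den_ne ha hw)

lemma mobius_hasDerivAt {a : ℂ} (ha : ‖a‖ < 1) :
    HasDerivAt (fun x => (x - a) / (1 - (starRingEnd ℂ) a * x))
      ((1 - (starRingEnd ℂ) a * a)⁻¹) a := by
  have hden : 1 - (starRingEnd ℂ) a * a ≠ 0 := mobius_den_ne ha ha
  have h1 : HasDerivAt (fun x : ℂ => x - a) 1 a := (hasDerivAt_id a).sub_const a
  have h2 : HasDerivAt (fun x : ℂ => 1 - (starRingEnd ℂ) a * x) (-(starRingEnd ℂ) a) a := by
    simpa using ((hasDerivAt_id a).const_mul ((starRingEnd ℂ) a)).const_sub 1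
  have := h1.div h2 hden
  rw [sub_self, zero_mul, sub_zero, one_mul, sq, div_mul_eq_div_div, div_self hden, one_div] at this
  exact this

lemma norm_mobius_deriv_ge {a : ℂ} (ha : ‖a‖ < 1) :
    1 ≤ ‖(1 - (starRingEnd ℂ) a * a)⁻¹‖ := by
  have h : (starRingEnd ℂ) a * a = (Complex.normSq a : ℂ) := by
    rw [mul_comm, Complex.mul_conj]
  rw [norm_inv, h]
  have h2 : ‖(1 : ℂ) - (Complex.normSq a : ℂ)‖ = 1 - Complex.normSq a := by
    rw [show (1 : ℂ) - (Complex.normSq a : ℂ) = ((1 - Complex.normSq a : ℝ) : ℂ) by push_cast; ring]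
    rw [Complex.norm_real, Real.norm_eq_abs, abs_of_nonneg]
    have : Complex.normSq a < 1 := normSq_lt_one_iff.2 ha
    linarith
  rw [h2]
  have hlt : Complex.normSq a < 1 := normSq_lt_one_iff.2 ha
  have hnn : 0 ≤ Complex.normSq a := Complex.normSq_nonneg a
  exact one_le_inv₀ (by linarith) |>.2 (by linarith)

/-- Key lemma: holomorphic self-maps of `U` do not increase the gauge. -/
lemma alph_comp_le {U : Set E} (hUo : IsOpen U) {h : E → E}
    (hh : DifferentiableOn ℂ h U) (hmapsh : Set.MapsTo h U U)
    {z : E} (hz : z ∈ U) (v : E) :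
    alph U (h z) (fderiv ℂ h z v) ≤ alph U z v := by
  refine iSup₂_le fun g hg => ?_
  obtain ⟨hgd, hglt⟩ := hg
  have hhzU : h z ∈ U := hmapsh hz
  set a := g (h z) with ha_def
  have ha : ‖a‖ < 1 := hglt _ hhzU
  set m : ℂ → ℂ := fun w => (w - a) / (1 - (starRingEnd ℂ) a * w) with hm_def
  have hhda : DifferentiableAt ℂ h z := hh.differentiableAt (hUo.mem_nhds hz)
  have hgda : DifferentiableAt ℂ g (h z) := hgd.differentiableAt (hUo.mem_nhds hhzU)
  have Hgh : HasFDerivAt (g ∘ h) ((fderiv ℂ g (h z)).comp (fderiv ℂ h z)) z :=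
    (hgda.hasFDerivAt).comp z (hhda.hasFDerivAt)
  have Hm' : HasDerivAt m ((1 - (starRingEnd ℂ) a * a)⁻¹) ((g ∘ h) z) := mobius_hasDerivAt ha
  have Hfull : HasFDerivAt (m ∘ (g ∘ h))
      (((1 - (starRingEnd ℂ) a * a)⁻¹) • ((fderiv ℂ g (h z)).comp (fderiv ℂ h z))) z :=
    Hm'.comp_hasFDerivAt z Hgh
  have hmem : (m ∘ (g ∘ h)) ∈ ehS U := by
    constructor
    · intro y hy
      exact ((mobius_differentiableAt ha (hglt _ (hmapsh hy))).comp y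
        ((hgd.differentiableAt (hUo.mem_nhds (hmapsh hy))).comp y
          (hh.differentiableAt (hUo.mem_nhds hy)))).differentiableWithinAt
    · intro y hy
      exact mobius_norm_lt ha (hglt _ (hmapsh hy))
  have key : (‖fderiv ℂ g (h z) (fderiv ℂ h z v)‖₊ : ℝ≥0∞)
      ≤ (‖fderiv ℂ (m ∘ (g ∘ h)) z v‖₊ : ℝ≥0∞) := by
    rw [Hfull.fderiv]
    simp only [ContinuousLinearMap.smul_apply, ContinuousLinearMap.coe_comp', Function.comp_apply]
    rw [show ∀ c : ℂ, ∀ x : ℂ, ‖c • x‖₊ = ‖c‖₊ * ‖x‖₊ from fun c x => nnnorm_smul c x]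
    have h1 : (1 : ℝ≥0) ≤ ‖(1 - (starRingEnd ℂ) a * a)⁻¹‖₊ := by
      rw [← NNReal.coe_le_coe]; exact_mod_cast norm_mobius_deriv_ge ha
    calc (‖fderiv ℂ g (h z) (fderiv ℂ h z v)‖₊ : ℝ≥0∞)
        = 1 * ‖fderiv ℂ g (h z) (fderiv ℂ h z v)‖₊ := (one_mul _).symm
      _ ≤ (‖(1 - (starRingEnd ℂ) a * a)⁻¹‖₊ : ℝ≥0∞) * ‖fderiv ℂ g (h z) (fderiv ℂ h z v)‖₊ := by
          gcongr
          exact_mod_cast h1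
  calc (‖fderiv ℂ g (h z) (fderiv ℂ h z v)‖₊ : ℝ≥0∞)
      ≤ (‖fderiv ℂ (m ∘ (g ∘ h)) z v‖₊ : ℝ≥0∞) := key
    _ ≤ alph U z v := le_iSup₂_of_le (m ∘ (g ∘ h)) hmem le_rfl

/-- Cauchy/Schwarz-type derivative bound for members of `ehS`. -/
lemma ehS_deriv_bound {U : Set E} (hUo : IsOpen U) {g : E → ℂ} (hg : g ∈ ehS U)
    {z : E} {r : ℝ} (hr : 0 < r) (hball : closedBall z r ⊆ U) (v : E) :
    ‖fderiv ℂ g z v‖ ≤ 2 * ‖v‖ / r := by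
  obtain ⟨hgd, hglt⟩ := hg
  have hzU : z ∈ U := hball (mem_closedBall_self hr.le)
  have hgda : DifferentiableAt ℂ g z := hgd.differentiableAt (hUo.mem_nhds hzU)
  rcases eq_or_ne v 0 with rfl | hv
  · simpa using by positivity
  have hvpos : 0 < ‖v‖ := norm_pos_iff.2 hv
  set u : E := (r / ‖v‖) • v with hu_def
  have hu_norm : ‖u‖ = r := by
    rw [hu_def, norm_smul, Real.norm_eq_abs, abs_of_pos (by positivity)]
    field_simp
  set φ : ℂ → ℂ := fun ζ => g (z + ζ • u) with hφ_def
  have hline : ∀ ζ : ℂ, ‖ζ‖ < 1 → z + ζ • u ∈ U := by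
    intro ζ hζ
    apply hball
    rw [mem_closedBall, dist_eq_norm, add_sub_cancel_left, norm_smul, hu_norm]
    nlinarith [norm_nonneg ζ]
  have hφd : DifferentiableOn ℂ φ (ball 0 1) := by
    intro ζ hζ
    rw [mem_ball, dist_zero_right] at hζ
    exact ((hgd.differentiableAt (hUo.mem_nhds (hline ζ hζ))).comp ζ
      ((differentiableAt_id.smul_const u).const_add z)).differentiableWithinAt
  have hφmaps : Set.MapsTo φ (ball 0 1) (ball (φ 0) 2) := by
    intro ζ hζ
    rw [mem_ball, dist_zero_right] at hζ
    have h1 : ‖φ ζ‖ < 1 := hglt _ (hline ζ hζ)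
    have h2 : ‖φ 0‖ < 1 := hglt _ (hline 0 (by simp))
    rw [mem_ball, dist_eq_norm]
    calc ‖φ ζ - φ 0‖ ≤ ‖φ ζ‖ + ‖φ 0‖ := norm_sub_le _ _
      _ < 2 := by linarith
  have hSchwarz := Complex.norm_deriv_le_div_of_mapsTo_ball hφd (hφmaps.mono_right ball_subset_closedBall) one_pos
  have hz0 : z + (0:ℂ) • u = z := by simp
  have hDφ : HasDerivAt φ (fderiv ℂ g z u) 0 := by
    have hlineD : HasDerivAt (fun ζ : ℂ => z + ζ • u) u 0 := by
      simpa using ((hasDerivAt_id (0:ℂ)).smul_const u).const_add z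
    have hgda' : HasFDerivAt g (fderiv ℂ g z) (z + (0:ℂ) • u) := by
      rw [hz0]; exact hgda.hasFDerivAt
    exact hgda'.comp_hasDerivAt 0 hlineD
  have hval : ‖fderiv ℂ g z u‖ ≤ 2 / 1 := by
    rw [← hDφ.deriv]; exact hSchwarz
  have hlin : fderiv ℂ g z u = (r / ‖v‖) • fderiv ℂ g z v := by
    rw [hu_def, ContinuousLinearMap.map_smul_of_tower]
  have h5 : (r / ‖v‖) * ‖fderiv ℂ g z v‖ ≤ 2 := by
    rw [hlin] at hval
    rw [norm_smul, Real.norm_eq_abs, abs_of_pos (by positivity)] at hval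
    linarith
  rw [div_mul_eq_mul_div, div_le_iff₀ hvpos] at h5
  rw [le_div_iff₀ hr]
  linarith

/-- Cauchy-type upper bound for the gauge. -/
lemma alph_le_upper {U : Set E} (hUo : IsOpen U) {z : E} {r : ℝ} (hr : 0 < r)
    (hball : closedBall z r ⊆ U) (v : E) :
    alph U z v ≤ ENNReal.ofReal (2 * ‖v‖ / r) := by
  refine iSup₂_le fun g hg => ?_
  rw [← enorm_eq_nnnorm, ← ofReal_norm_eq_enorm]
  exact ENNReal.ofReal_le_ofReal (ehS_deriv_bound hUo hg hr hball v)

/-- Linear-functional lower bound for the gauge. -/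
lemma le_alph_lower {U : Set E} (hUb : Bornology.IsBounded U) {z : E} (hz : z ∈ U) (v : E) :
    ENNReal.ofReal (‖v‖ / (diam U + 1)) ≤ alph U z v := by
  rcases eq_or_ne v 0 with rfl | hv
  · simp
  have hvpos : 0 < ‖v‖ := norm_pos_iff.2 hv
  have hDpos : 0 < diam U + 1 := by positivity
  set c : ℂ := (((‖v‖ * (diam U + 1))⁻¹ : ℝ) : ℂ) with hc_def
  set g : E → ℂ := fun y => ((innerSL ℂ v) (y - z)) * c with hg_def
  have hgmem : g ∈ ehS U := by
    constructor
    · intro y hy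
      exact (((innerSL ℂ v).differentiableAt.comp y
        (differentiableAt_id.sub_const z)).mul_const c).differentiableWithinAt
    · intro y hy
      rw [hg_def]
      simp only [norm_mul, hc_def, Complex.norm_real, Real.norm_eq_abs,
        abs_of_pos (by positivity : (0:ℝ) < (‖v‖ * (diam U + 1))⁻¹)]
      have h1 : ‖(innerSL ℂ v) (y - z)‖ ≤ ‖v‖ * ‖y - z‖ := norm_inner_le_norm v (y - z)
      have h2 : ‖y - z‖ ≤ diam U := by
        rw [← dist_eq_norm]; exact dist_le_diam_of_mem hUb hy hz
      calc ‖(innerSL ℂ v) (y - z)‖ * (‖v‖ * (diam U + 1))⁻¹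
          ≤ (‖v‖ * diam U) * (‖v‖ * (diam U + 1))⁻¹ := by
            apply mul_le_mul_of_nonneg_right _ (by positivity)
            calc ‖(innerSL ℂ v) (y - z)‖ ≤ ‖v‖ * ‖y - z‖ := h1
              _ ≤ ‖v‖ * diam U := by nlinarith
        _ < 1 := by
            rw [mul_inv_lt_iff₀ (by positivity)]
            nlinarith [diam_nonneg (s := U)]
  have hD : HasFDerivAt g (c • (innerSL ℂ v)) z := by
    have h2 : HasFDerivAt (fun y : E => y - z) (ContinuousLinearMap.id ℂ E) z :=
      (hasFDerivAt_id z).sub_const z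
    have h1 : HasFDerivAt (fun y : E => (innerSL ℂ v) (y - z))
        ((innerSL ℂ v).comp (ContinuousLinearMap.id ℂ E)) z :=
      HasFDerivAt.comp z ((innerSL ℂ v).hasFDerivAt (x := z - z)) h2
    rw [ContinuousLinearMap.comp_id] at h1
    exact h1.mul_const c
  have hval : ‖fderiv ℂ g z v‖ = ‖v‖ / (diam U + 1) := by
    rw [hD.fderiv]
    simp only [ContinuousLinearMap.smul_apply, innerSL_apply_apply, smul_eq_mul]
    rw [norm_mul, hc_def, Complex.norm_real, Real.norm_eq_abs,
      abs_of_pos (by positivity : (0:ℝ) < (‖v‖ * (diam U + 1))⁻¹)]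
    rw [inner_self_eq_norm_sq_to_K, norm_pow, RCLike.norm_ofReal, abs_of_pos hvpos]
    field_simp
  refine le_trans ?_ (le_iSup₂_of_le g hgmem le_rfl)
  rw [← enorm_eq_nnnorm, ← ofReal_norm_eq_enorm, hval]

/-- Vector-valued Cauchy estimate for a bounded holomorphic map. -/
lemma fderiv_vector_bound {U : Set E} (hUo : IsOpen U) {f : E → E}
    (hf : DifferentiableOn ℂ f U) {B : ℝ} (hB : 0 ≤ B) (hbound : ∀ y ∈ U, ‖f y‖ ≤ B)
    {z : E} {r : ℝ} (hr : 0 < r) (hball : closedBall z r ⊆ U) (v : E) :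
    ‖fderiv ℂ f z v‖ ≤ (2 * B + 1) * (2 * ‖v‖ / r) := by
  have hzU : z ∈ U := hball (mem_closedBall_self hr.le)
  set w := fderiv ℂ f z v with hw
  rcases eq_or_ne w 0 with h0 | hw0
  · rw [h0]
    simp only [norm_zero]
    positivity
  have hwpos : 0 < ‖w‖ := norm_pos_iff.2 hw0
  set c : ℂ := (((‖w‖ * (2 * B + 1))⁻¹ : ℝ) : ℂ) with hc_def
  set g : E → ℂ := fun y => ((innerSL ℂ w) (f y)) * c with hg_def
  have hgmem : g ∈ ehS U := by
    constructor
    · intro y hy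
      exact (((innerSL ℂ w).differentiableAt.comp y
        (hf.differentiableAt (hUo.mem_nhds hy))).mul_const c).differentiableWithinAt
    · intro y hy
      rw [hg_def]
      simp only [norm_mul, hc_def, Complex.norm_real, Real.norm_eq_abs,
        abs_of_pos (by positivity : (0:ℝ) < (‖w‖ * (2 * B + 1))⁻¹)]
      have h1 : ‖(innerSL ℂ w) (f y)‖ ≤ ‖w‖ * ‖f y‖ := norm_inner_le_norm w (f y)
      calc ‖(innerSL ℂ w) (f y)‖ * (‖w‖ * (2 * B + 1))⁻¹
          ≤ (‖w‖ * B) * (‖w‖ * (2 * B + 1))⁻¹ := by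
            apply mul_le_mul_of_nonneg_right _ (by positivity)
            calc ‖(innerSL ℂ w) (f y)‖ ≤ ‖w‖ * ‖f y‖ := h1
              _ ≤ ‖w‖ * B := by nlinarith [hbound y hy]
        _ < 1 := by
            rw [mul_inv_lt_iff₀ (by positivity)]
            nlinarith
  have hD : HasFDerivAt g (c • ((innerSL ℂ w).comp (fderiv ℂ f z))) z := by
    have h1 : HasFDerivAt (fun y : E => (innerSL ℂ w) (f y))
        ((innerSL ℂ w).comp (fderiv ℂ f z)) z :=
      HasFDerivAt.comp z ((innerSL ℂ w).hasFDerivAt (x := f z))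
        (hf.differentiableAt (hUo.mem_nhds hzU)).hasFDerivAt
    exact h1.mul_const c
  have hval : ‖fderiv ℂ g z v‖ = ‖w‖ / (2 * B + 1) := by
    rw [hD.fderiv]
    simp only [ContinuousLinearMap.smul_apply, ContinuousLinearMap.coe_comp',
      Function.comp_apply, innerSL_apply_apply, smul_eq_mul]
    rw [norm_mul, hc_def, Complex.norm_real, Real.norm_eq_abs,
      abs_of_pos (by positivity : (0:ℝ) < (‖w‖ * (2 * B + 1))⁻¹)]
    rw [show (inner ℂ w (fderiv ℂ f z v) : ℂ) = inner ℂ w w from by rw [← hw]]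
    rw [inner_self_eq_norm_sq_to_K, norm_pow, RCLike.norm_ofReal, abs_of_pos hwpos]
    field_simp
  have h2 := ehS_deriv_bound hUo hgmem hr hball v
  rw [hval, div_le_iff₀ (by positivity : (0:ℝ) < 2 * B + 1)] at h2
  calc ‖w‖ ≤ 2 * ‖v‖ / r * (2 * B + 1) := h2
    _ = (2 * B + 1) * (2 * ‖v‖ / r) := by ring

lemma fderiv_bound_on_compact {U : Set E} (hUo : IsOpen U) {f : E → E}
    (hf : DifferentiableOn ℂ f U) {B : ℝ} (hB : 0 ≤ B) (hbound : ∀ y ∈ U, ‖f y‖ ≤ B)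
    {C : Set E} (hC : IsCompact C) (hCU : C ⊆ U) :
    ∃ M : ℝ, 0 ≤ M ∧ ∀ z ∈ C, ∀ v : E, ‖fderiv ℂ f z v‖ ≤ M * ‖v‖ := by
  obtain ⟨ρ, hρ, hρU⟩ := hC.exists_thickening_subset_open hUo hCU
  refine ⟨(2 * B + 1) * (4 / ρ), by positivity, ?_⟩
  intro z hz v
  have hball : closedBall z (ρ / 2) ⊆ U := by
    intro x hx
    apply hρU
    rw [mem_thickening_iff]
    exact ⟨z, hz, lt_of_le_of_lt (mem_closedBall.1 hx) (by linarith)⟩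
  have h1 := fderiv_vector_bound hUo hf hB hbound (by linarith : (0:ℝ) < ρ / 2) hball v
  calc ‖fderiv ℂ f z v‖ ≤ (2 * B + 1) * (2 * ‖v‖ / (ρ / 2)) := h1
    _ = (2 * B + 1) * (4 / ρ) * ‖v‖ := by field_simp; ring

/-- Homogeneity of the gauge under real scalars. -/
lemma alph_smul (U : Set E) (w x : E) (c : ℝ) :
    alph U w (c • x) = (‖c‖₊ : ℝ≥0∞) * alph U w x := by
  unfold alph
  rw [ENNReal.mul_iSup]
  congr 1; funext g
  rw [ENNReal.mul_iSup]
  congr 1; funext hg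
  rw [ContinuousLinearMap.map_smul_of_tower, nnnorm_smul, ENNReal.coe_mul]

/-- The Earle–Hamilton dilation trick: `f` strictly contracts the gauge. -/
lemma alph_dilation {U : Set E} (hUo : IsOpen U)
    {f : E → E} (hf : DifferentiableOn ℂ f U)
    {K : Set E} (hfK : f '' U ⊆ K)
    {δ dK t : ℝ} (hδ : 0 < δ) (hthick : thickening δ K ⊆ U)
    (hdK : ∀ x ∈ K, ∀ y ∈ K, dist x y ≤ dK) (hdK0 : 0 ≤ dK)
    (ht : t = 1 + δ / (2 * (dK + 1)))
    {z : E} (hz : z ∈ U) (v : E) :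
    alph U (f z) (fderiv ℂ f z v) ≤ ENNReal.ofReal t⁻¹ * alph U z v := by
  have ht1 : 1 < t := by
    rw [ht]
    have : 0 < δ / (2 * (dK + 1)) := by positivity
    linarith
  have htpos : 0 < t := by linarith
  set F : E → E := fun y => t • f y - (t - 1) • f z with hF_def
  have hFd : DifferentiableOn ℂ F U := (hf.const_smul t).sub_const _
  have hFmaps : Set.MapsTo F U U := by
    intro y hy
    have hfy : f y ∈ K := hfK ⟨y, hy, rfl⟩
    have hfz : f z ∈ K := hfK ⟨z, hz, rfl⟩
    apply hthick
    rw [mem_thickening_iff]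
    refine ⟨f y, hfy, ?_⟩
    have hsub : F y - f y = (t - 1) • (f y - f z) := by
      rw [hF_def]; module
    rw [dist_eq_norm, hsub, norm_smul, Real.norm_eq_abs, abs_of_pos (by linarith)]
    have hd : ‖f y - f z‖ ≤ dK := by rw [← dist_eq_norm]; exact hdK _ hfy _ hfz
    have : (t - 1) * dK < δ := by
      rw [ht]
      have h2 : (0:ℝ) < 2 * (dK + 1) := by linarith
      rw [show 1 + δ / (2 * (dK + 1)) - 1 = δ / (2 * (dK + 1)) by ring,
        div_mul_eq_mul_div, div_lt_iff₀ h2]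
      nlinarith
    nlinarith [norm_nonneg (f y - f z)]
  have hFz : F z = f z := by rw [hF_def]; module
  have hfda : DifferentiableAt ℂ f z := hf.differentiableAt (hUo.mem_nhds hz)
  have hFD : HasFDerivAt F (t • fderiv ℂ f z) z := by
    exact (hfda.hasFDerivAt.const_smul t).sub_const ((t - 1) • f z)
  have hmain := alph_comp_le hUo hFd hFmaps hz v
  rw [hFz, hFD.fderiv] at hmain
  have happ : (t • fderiv ℂ f z) v = t • (fderiv ℂ f z v) := rfl
  rw [happ, alph_smul, ← enorm_eq_nnnorm, Real.enorm_eq_ofReal htpos.le] at hmain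
  have hne0 : ENNReal.ofReal t ≠ 0 := by
    simp only [ne_eq, ENNReal.ofReal_eq_zero, not_le]; linarith
  have hnetop : ENNReal.ofReal t ≠ ⊤ := ENNReal.ofReal_ne_top
  calc alph U (f z) (fderiv ℂ f z v)
      = ((ENNReal.ofReal t)⁻¹ * ENNReal.ofReal t) * alph U (f z) (fderiv ℂ f z v) := by
        rw [ENNReal.inv_mul_cancel hne0 hnetop, one_mul]
    _ = (ENNReal.ofReal t)⁻¹ * (ENNReal.ofReal t * alph U (f z) (fderiv ℂ f z v)) := by
        rw [mul_assoc]
    _ ≤ (ENNReal.ofReal t)⁻¹ * alph U z v := mul_le_mul_right hmain _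
    _ = ENNReal.ofReal t⁻¹ * alph U z v := by rw [ENNReal.ofReal_inv_of_pos htpos]

/-- Admissible curves. -/
def Adm (U : Set E) (γ : ℝ → E) : Prop :=
  (∃ O : Set ℝ, IsOpen O ∧ Icc (0:ℝ) 1 ⊆ O ∧ DifferentiableOn ℝ γ O) ∧
    IntervalIntegrable (deriv γ) volume 0 1 ∧ Set.MapsTo γ (Icc (0:ℝ) 1) U

/-- Length of a curve with respect to the gauge. -/
def clength (U : Set E) (γ : ℝ → E) : ℝ≥0∞ :=
  ∫⁻ s in Ioc (0:ℝ) 1, alph U (γ s) (deriv γ s)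

/-- One-curve cost. -/
def eCost (U : Set E) (p q : E) : ℝ≥0∞ :=
  ⨅ (γ : ℝ → E) (_ : Adm U γ) (_ : γ 0 = p) (_ : γ 1 = q), clength U γ

/-- Chain pseudodistance. -/
def dCost (U : Set E) (p q : E) : ℝ≥0∞ :=
  ⨅ (N : ℕ) (x : ℕ → E) (_ : x 0 = p) (_ : x N = q),
    ∑ i ∈ Finset.range N, eCost U (x i) (x (i + 1))

lemma dCost_le_chain (U : Set E) {p q : E} (N : ℕ) (x : ℕ → E)
    (hx0 : x 0 = p) (hxN : x N = q) :
    dCost U p q ≤ ∑ i ∈ Finset.range N, eCost U (x i) (x (i + 1)) :=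
  iInf_le_of_le N (iInf_le_of_le x (iInf_le_of_le hx0 (iInf_le_of_le hxN le_rfl)))

lemma dCost_self (U : Set E) (p : E) : dCost U p p = 0 := by
  refine le_antisymm ?_ zero_le
  simpa using dCost_le_chain U 0 (fun _ => p) rfl rfl

lemma dCost_le_eCost (U : Set E) (p q : E) : dCost U p q ≤ eCost U p q := by
  have h := dCost_le_chain U (p := p) (q := q) 1 (fun i => if i = 0 then p else q)
    (if_pos rfl) (if_neg one_ne_zero)
  simpa using h

lemma dCost_triangle (U : Set E) (p r q : E) :
    dCost U p q ≤ dCost U p r + dCost U r q := by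
  have key : ∀ (N : ℕ) (x : ℕ → E), x 0 = p → x N = r →
      ∀ (M : ℕ) (y : ℕ → E), y 0 = r → y M = q →
      dCost U p q ≤ (∑ i ∈ Finset.range N, eCost U (x i) (x (i + 1)))
        + ∑ i ∈ Finset.range M, eCost U (y i) (y (i + 1)) := by
    intro N x hx0 hxN M y hy0 hyM
    set z : ℕ → E := fun i => if i < N then x i else y (i - N) with hz_def
    have hz0 : z 0 = p := by
      rcases Nat.eq_zero_or_pos N with h | h
      · subst h
        simp only [hz_def]
        norm_num
        rw [hy0, ← hxN, hx0]
      · simp [hz_def, h, hx0]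
    have hzNM : z (N + M) = q := by
      have : ¬ (N + M < N) := by omega
      simp [hz_def, this, hyM]
    refine le_trans (dCost_le_chain U (N + M) z hz0 hzNM) ?_
    rw [Finset.sum_range_add]
    gcongr with i hi j hj
    · rw [Finset.mem_range] at hi
      have h1 : z i = x i := by simp [hz_def, hi]
      have h2 : z (i + 1) = x (i + 1) := by
        rcases lt_or_eq_of_le (Nat.succ_le_of_lt hi) with h | h
        · simp [hz_def, h]
        · have h2 : ¬ (i + 1 < N) := by omega
          have h4 : i + 1 - N = 0 := by omega
          have h3 : x (i + 1) = r := by rw [show i + 1 = N from h]; exact hxN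
          simp only [hz_def, if_neg h2, h4, hy0, h3]
      rw [h1, h2]
    · rw [Finset.mem_range] at hj
      have h1 : z (N + j) = y j := by
        have : ¬ (N + j < N) := by omega
        simp [hz_def, this]
      have h2 : z (N + j + 1) = y (j + 1) := by
        have h5 : ¬ (N + j + 1 < N) := by omega
        have h3 : N + j + 1 - N = j + 1 := by omega
        simp [hz_def, h5, h3]
      rw [h1, h2]
  set C := dCost U r q with hC
  have expand : dCost U p r + C
      = ⨅ (N : ℕ) (x : ℕ → E) (_ : x 0 = p) (_ : x N = r),
          ((∑ i ∈ Finset.range N, eCost U (x i) (x (i + 1))) + C) := by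
    simp only [dCost, ENNReal.iInf_add]
  rw [expand]
  refine le_iInf fun N => le_iInf fun x => le_iInf fun hx0 => le_iInf fun hxN => ?_
  have expand2 : (∑ i ∈ Finset.range N, eCost U (x i) (x (i + 1))) + C
      = ⨅ (M : ℕ) (y : ℕ → E) (_ : y 0 = r) (_ : y M = q),
          ((∑ i ∈ Finset.range N, eCost U (x i) (x (i + 1)))
            + ∑ i ∈ Finset.range M, eCost U (y i) (y (i + 1))) := by
    rw [hC]; simp only [dCost, ENNReal.add_iInf]
  rw [expand2]
  exact le_iInf fun M => le_iInf fun y => le_iInf fun hy0 => le_iInf fun hyM =>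
    key N x hx0 hxN M y hy0 hyM

lemma eCost_le_clength {U : Set E} {γ : ℝ → E} (hγ : Adm U γ) {p q : E}
    (h0 : γ 0 = p) (h1 : γ 1 = q) : eCost U p q ≤ clength U γ :=
  iInf_le_of_le γ (iInf_le_of_le hγ (iInf_le_of_le h0 (iInf_le_of_le h1 le_rfl)))

lemma clength_lower {U : Set E} (hUb : Bornology.IsBounded U) {γ : ℝ → E} (hγ : Adm U γ) :
    ENNReal.ofReal (dist (γ 1) (γ 0) / (diam U + 1)) ≤ clength U γ := by
  obtain ⟨⟨O, hO, hIccO, hγd⟩, hγint, hγmaps⟩ := hγ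
  have hDpos : (0:ℝ) < diam U + 1 := by positivity
  have hγda : ∀ s ∈ Icc (0:ℝ) 1, DifferentiableAt ℝ γ s := fun s hs =>
    hγd.differentiableAt (hO.mem_nhds (hIccO hs))
  have hFTC : ∫ s in (0:ℝ)..1, deriv γ s = γ 1 - γ 0 := by
    apply intervalIntegral.integral_deriv_eq_sub
    · intro s hs
      rw [uIcc_of_le (by norm_num : (0:ℝ) ≤ 1)] at hs
      exact hγda s hs
    · exact hγint
  have hInt : IntegrableOn (fun s => ‖deriv γ s‖) (Ioc (0:ℝ) 1) :=
    ((intervalIntegrable_iff_integrableOn_Ioc_of_le (by norm_num)).1 hγint).norm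
  have hnorm_ineq : dist (γ 1) (γ 0) ≤ ∫ s in Ioc (0:ℝ) 1, ‖deriv γ s‖ := by
    rw [dist_eq_norm, ← hFTC, intervalIntegral.integral_of_le (by norm_num : (0:ℝ) ≤ 1)]
    exact norm_integral_le_integral_norm _
  calc ENNReal.ofReal (dist (γ 1) (γ 0) / (diam U + 1))
      ≤ ENNReal.ofReal ((∫ s in Ioc (0:ℝ) 1, ‖deriv γ s‖) / (diam U + 1)) := by
        apply ENNReal.ofReal_le_ofReal
        gcongr
    _ = ∫⁻ s in Ioc (0:ℝ) 1, ENNReal.ofReal (‖deriv γ s‖ / (diam U + 1)) := by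
        rw [show (∫ s in Ioc (0:ℝ) 1, ‖deriv γ s‖) / (diam U + 1)
            = ∫ s in Ioc (0:ℝ) 1, ‖deriv γ s‖ / (diam U + 1) from (integral_div _ _).symm]
        apply ofReal_integral_eq_lintegral_ofReal
        · exact hInt.div_const _
        · filter_upwards with s
          positivity
    _ ≤ clength U γ := by
        apply lintegral_mono_ae
        filter_upwards [ae_restrict_mem measurableSet_Ioc] with s hs
        exact le_alph_lower hUb (hγmaps (Ioc_subset_Icc_self hs)) _

lemma eCost_lower {U : Set E} (hUb : Bornology.IsBounded U) (p q : E) :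
    ENNReal.ofReal (dist p q / (diam U + 1)) ≤ eCost U p q := by
  refine le_iInf fun γ => le_iInf fun hγ => le_iInf fun h0 => le_iInf fun h1 => ?_
  have h2 := clength_lower hUb hγ
  rw [h0, h1, dist_comm] at h2
  exact h2

lemma dCost_lower {U : Set E} (hUb : Bornology.IsBounded U) (p q : E) :
    ENNReal.ofReal (dist p q / (diam U + 1)) ≤ dCost U p q := by
  have hDpos : (0:ℝ) < diam U + 1 := by positivity
  refine le_iInf fun N => le_iInf fun x => le_iInf fun hx0 => le_iInf fun hxN => ?_
  calc ENNReal.ofReal (dist p q / (diam U + 1))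
      ≤ ENNReal.ofReal ((∑ i ∈ Finset.range N, dist (x i) (x (i + 1))) / (diam U + 1)) := by
        apply ENNReal.ofReal_le_ofReal
        gcongr
        rw [← hx0, ← hxN]
        exact dist_le_range_sum_dist x N
    _ = ∑ i ∈ Finset.range N, ENNReal.ofReal (dist (x i) (x (i + 1)) / (diam U + 1)) := by
        rw [Finset.sum_div, ENNReal.ofReal_sum_of_nonneg]
        intro i _
        positivity
    _ ≤ ∑ i ∈ Finset.range N, eCost U (x i) (x (i + 1)) :=
        Finset.sum_le_sum fun i _ => eCost_lower hUb _ _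

/-- Cost of a straight segment well inside `U`. -/
lemma eCost_segment {U : Set E} (hUo : IsOpen U) {a b : E} {r : ℝ} (hr : 0 < r)
    (hball : closedBall a r ⊆ U) (hab : dist a b ≤ r / 2) :
    eCost U a b ≤ ENNReal.ofReal (4 * dist a b / r) := by
  set γ : ℝ → E := fun s => a + s • (b - a) with hγ_def
  have hderiv : ∀ s : ℝ, deriv γ s = b - a := by
    intro s
    have h1 : HasDerivAt γ ((1:ℝ) • (b - a)) s := ((hasDerivAt_id s).smul_const (b - a)).const_add a
    simpa using h1.deriv
  have hmem : ∀ s ∈ Icc (0:ℝ) 1, γ s ∈ closedBall a (r / 2) := by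
    intro s hs
    have hsa : γ s - a = s • (b - a) := by rw [hγ_def]; simp
    rw [mem_closedBall, dist_eq_norm, hsa, norm_smul, Real.norm_eq_abs, abs_of_nonneg hs.1]
    have : ‖b - a‖ ≤ r / 2 := by rw [← dist_eq_norm, dist_comm]; exact hab
    nlinarith [hs.2, norm_nonneg (b - a), hs.1]
  have hAdm : Adm U γ := by
    refine ⟨⟨univ, isOpen_univ, subset_univ _, ?_⟩, ?_, ?_⟩
    · exact ((differentiable_const a).add (differentiable_id.smul_const (b - a))).differentiableOn
    · rw [show deriv γ = fun _ => b - a from funext hderiv]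
      exact intervalIntegrable_const
    · intro s hs
      exact hball (closedBall_subset_closedBall (by linarith) (hmem s hs))
  have hlen : clength U γ ≤ ENNReal.ofReal (4 * dist a b / r) := by
    have hbound : ∀ s ∈ Ioc (0:ℝ) 1, alph U (γ s) (deriv γ s)
        ≤ ENNReal.ofReal (4 * dist a b / r) := by
      intro s hs
      rw [hderiv s]
      have hsub : closedBall (γ s) (r / 2) ⊆ U := by
        refine subset_trans (closedBall_subset_closedBall' ?_) hball
        have h6 := hmem s (Ioc_subset_Icc_self hs)
        rw [mem_closedBall] at h6
        linarith
      refine le_trans (alph_le_upper hUo (by linarith) hsub _) ?_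
      apply ENNReal.ofReal_le_ofReal
      apply le_of_eq
      rw [dist_eq_norm, norm_sub_rev]
      field_simp
      ring
    calc clength U γ ≤ ∫⁻ _ in Ioc (0:ℝ) 1, ENNReal.ofReal (4 * dist a b / r) := by
          apply lintegral_mono_ae
          filter_upwards [ae_restrict_mem measurableSet_Ioc] with s hs
          exact hbound s hs
      _ = ENNReal.ofReal (4 * dist a b / r) := by
          rw [setLIntegral_const, Real.volume_Ioc]
          norm_num
  exact le_trans (eCost_le_clength hAdm (by simp [hγ_def]) (by simp [hγ_def])) hlen

lemma clength_contract {U : Set E} (hUo : IsOpen U) {f : E → E}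
    (hf : DifferentiableOn ℂ f U) (hmaps : Set.MapsTo f U U) {K : Set E} (hfK : f '' U ⊆ K)
    {B : ℝ} (hB : 0 ≤ B) (hbound : ∀ y ∈ U, ‖f y‖ ≤ B)
    {δ dK t : ℝ} (hδ : 0 < δ) (hthick : thickening δ K ⊆ U)
    (hdK : ∀ x ∈ K, ∀ y ∈ K, dist x y ≤ dK) (hdK0 : 0 ≤ dK)
    (ht : t = 1 + δ / (2 * (dK + 1)))
    {γ : ℝ → E} (hγ : Adm U γ) :
    Adm U (f ∘ γ) ∧ clength U (f ∘ γ) ≤ ENNReal.ofReal t⁻¹ * clength U γ := by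
  obtain ⟨⟨O, hO, hIccO, hγd⟩, hγint, hγmaps⟩ := hγ
  set O' : Set ℝ := O ∩ γ ⁻¹' U with hO'_def
  have hO' : IsOpen O' := hγd.continuousOn.isOpen_inter_preimage hO hUo
  have hIccO' : Icc (0:ℝ) 1 ⊆ O' := fun s hs => ⟨hIccO hs, hγmaps hs⟩
  have hγda : ∀ s ∈ O', DifferentiableAt ℝ γ s := fun s hs =>
    hγd.differentiableAt (hO.mem_nhds hs.1)
  have hcomp : ∀ s ∈ O', HasDerivAt (f ∘ γ) ((fderiv ℂ f (γ s)) (deriv γ s)) s := by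
    intro s hs
    have hγdiff : HasDerivAt γ (deriv γ s) s := (hγda s hs).hasDerivAt
    have hfd : HasFDerivAt f (fderiv ℂ f (γ s)) (γ s) :=
      (hf.differentiableAt (hUo.mem_nhds hs.2)).hasFDerivAt
    have h2 := (hfd.restrictScalars ℝ).comp_hasDerivAt s hγdiff
    simpa using h2
  -- derivative bound on the compact image
  have hCcompact : IsCompact (γ '' Icc (0:ℝ) 1) :=
    isCompact_Icc.image_of_continuousOn ((hγd.continuousOn).mono hIccO)
  have hCsub : γ '' Icc (0:ℝ) 1 ⊆ U := image_subset_iff.2 fun s hs => hγmaps hs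
  obtain ⟨M, hM0, hM⟩ := fderiv_bound_on_compact hUo hf hB hbound hCcompact hCsub
  have hAdm : Adm U (f ∘ γ) := by
    refine ⟨⟨O', hO', hIccO', fun s hs => ((hcomp s hs).differentiableAt).differentiableWithinAt⟩,
      ?_, fun s hs => hmaps (hγmaps hs)⟩
    rw [intervalIntegrable_iff_integrableOn_Ioc_of_le (by norm_num)]
    apply Integrable.mono (g := fun s => M * ‖deriv γ s‖)
    · exact (((intervalIntegrable_iff_integrableOn_Ioc_of_le (by norm_num)).1 hγint).norm.const_mul M)
    · exact ((stronglyMeasurable_deriv (f ∘ γ)).aestronglyMeasurable).restrict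
    · filter_upwards [ae_restrict_mem measurableSet_Ioc] with s hs
      have hsIcc := Ioc_subset_Icc_self hs
      rw [(hcomp s (hIccO' hsIcc)).deriv]
      calc ‖(fderiv ℂ f (γ s)) (deriv γ s)‖ ≤ M * ‖deriv γ s‖ :=
            hM _ (mem_image_of_mem γ hsIcc) _
        _ ≤ ‖M * ‖deriv γ s‖‖ := le_abs_self _
  refine ⟨hAdm, ?_⟩
  have hpt : ∀ s ∈ Ioc (0:ℝ) 1, alph U ((f ∘ γ) s) (deriv (f ∘ γ) s)
      ≤ ENNReal.ofReal t⁻¹ * alph U (γ s) (deriv γ s) := by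
    intro s hs
    have hsO' : s ∈ O' := hIccO' (Ioc_subset_Icc_self hs)
    rw [(hcomp s hsO').deriv]
    exact alph_dilation hUo hf hfK hδ hthick hdK hdK0 ht hsO'.2 (deriv γ s)
  calc clength U (f ∘ γ)
      ≤ ∫⁻ s in Ioc (0:ℝ) 1, ENNReal.ofReal t⁻¹ * alph U (γ s) (deriv γ s) := by
        apply lintegral_mono_ae
        filter_upwards [ae_restrict_mem measurableSet_Ioc] with s hs
        exact hpt s hs
    _ = ENNReal.ofReal t⁻¹ * clength U γ := lintegral_const_mul' _ _ ENNReal.ofReal_ne_top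

lemma eCost_contract {U : Set E} (hUo : IsOpen U) {f : E → E}
    (hf : DifferentiableOn ℂ f U) (hmaps : Set.MapsTo f U U) {K : Set E} (hfK : f '' U ⊆ K)
    {B : ℝ} (hB : 0 ≤ B) (hbound : ∀ y ∈ U, ‖f y‖ ≤ B)
    {δ dK t : ℝ} (hδ : 0 < δ) (hthick : thickening δ K ⊆ U)
    (hdK : ∀ x ∈ K, ∀ y ∈ K, dist x y ≤ dK) (hdK0 : 0 ≤ dK)
    (ht : t = 1 + δ / (2 * (dK + 1))) (htpos : 0 < t) (p q : E) :
    eCost U (f p) (f q) ≤ ENNReal.ofReal t⁻¹ * eCost U p q := by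
  set c := ENNReal.ofReal t⁻¹ with hc
  have hc0 : c ≠ 0 := by
    rw [hc]
    simp only [ne_eq, ENNReal.ofReal_eq_zero, not_le]
    positivity
  have hctop : c ≠ ⊤ := ENNReal.ofReal_ne_top
  have key : eCost U (f p) (f q) / c ≤ eCost U p q := by
    refine le_iInf fun γ => le_iInf fun hγ => le_iInf fun h0 => le_iInf fun h1 => ?_
    rw [ENNReal.div_le_iff_le_mul (Or.inl hc0) (Or.inl hctop)]
    obtain ⟨hAdm, hlen⟩ := clength_contract hUo hf hmaps hfK hB hbound hδ hthick hdK hdK0 ht hγ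
    have h3 : eCost U (f p) (f q) ≤ clength U (f ∘ γ) :=
      eCost_le_clength hAdm (by simp [Function.comp_apply, h0]) (by simp [Function.comp_apply, h1])
    exact (h3.trans hlen).trans (le_of_eq (mul_comm _ _))
  have h4 := (ENNReal.div_le_iff_le_mul (Or.inl hc0) (Or.inl hctop)).1 key
  rwa [mul_comm] at h4

lemma dCost_contract {U : Set E} (hUo : IsOpen U) {f : E → E}
    (hf : DifferentiableOn ℂ f U) (hmaps : Set.MapsTo f U U) {K : Set E} (hfK : f '' U ⊆ K)
    {B : ℝ} (hB : 0 ≤ B) (hbound : ∀ y ∈ U, ‖f y‖ ≤ B)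
    {δ dK t : ℝ} (hδ : 0 < δ) (hthick : thickening δ K ⊆ U)
    (hdK : ∀ x ∈ K, ∀ y ∈ K, dist x y ≤ dK) (hdK0 : 0 ≤ dK)
    (ht : t = 1 + δ / (2 * (dK + 1))) (htpos : 0 < t) (p q : E) :
    dCost U (f p) (f q) ≤ ENNReal.ofReal t⁻¹ * dCost U p q := by
  set c := ENNReal.ofReal t⁻¹ with hc
  have hc0 : c ≠ 0 := by
    rw [hc]
    simp only [ne_eq, ENNReal.ofReal_eq_zero, not_le]
    positivity
  have hctop : c ≠ ⊤ := ENNReal.ofReal_ne_top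
  have key : dCost U (f p) (f q) / c ≤ dCost U p q := by
    refine le_iInf fun N => le_iInf fun x => le_iInf fun hx0 => le_iInf fun hxN => ?_
    rw [ENNReal.div_le_iff_le_mul (Or.inl hc0) (Or.inl hctop)]
    calc dCost U (f p) (f q)
        ≤ ∑ i ∈ Finset.range N, eCost U (f (x i)) (f (x (i + 1))) :=
          dCost_le_chain U N (fun i => f (x i)) (by rw [hx0]) (by rw [hxN])
      _ ≤ ∑ i ∈ Finset.range N, c * eCost U (x i) (x (i + 1)) :=
          Finset.sum_le_sum fun i _ =>
            eCost_contract hUo hf hmaps hfK hB hbound hδ hthick hdK hdK0 ht htpos _ _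
      _ = (∑ i ∈ Finset.range N, eCost U (x i) (x (i + 1))) * c := by
          rw [← Finset.mul_sum, mul_comm]
  have h4 := (ENNReal.div_le_iff_le_mul (Or.inl hc0) (Or.inl hctop)).1 key
  rwa [mul_comm] at h4

lemma exists_good_ball {U : Set E} (hUo : IsOpen U) {y : E} (hy : y ∈ U) :
    ∃ r > 0, ball y r ⊆ U ∧
      ∀ y' ∈ ball y (r / 4), y' ∈ U ∧ eCost U y y' ≤ ENNReal.ofReal 2 ∧
        eCost U y' y ≤ ENNReal.ofReal 2 := by
  obtain ⟨r, hr, hrU⟩ := Metric.isOpen_iff.1 hUo y hy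
  refine ⟨r, hr, hrU, ?_⟩
  intro y' hy'
  rw [mem_ball] at hy'
  have hy'U : y' ∈ U := hrU (by rw [mem_ball]; linarith)
  have hball1 : closedBall y (r / 2) ⊆ U := by
    intro x hx
    rw [mem_closedBall] at hx
    exact hrU (by rw [mem_ball]; linarith)
  have hball2 : closedBall y' (r / 2) ⊆ U := by
    intro x hx
    rw [mem_closedBall] at hx
    have h7 := dist_triangle x y' y
    exact hrU (by rw [mem_ball]; linarith)
  have hd1 : dist y y' ≤ r / 2 / 2 := by
    rw [dist_comm]
    linarith [hy'.le]
  have hd2 : dist y' y ≤ r / 2 / 2 := by linarith [hy'.le]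
  refine ⟨hy'U, ?_, ?_⟩
  · refine le_trans (eCost_segment hUo (by linarith) hball1 hd1) ?_
    apply ENNReal.ofReal_le_ofReal
    rw [div_le_iff₀ (by linarith : (0:ℝ) < r / 2)]
    calc 4 * dist y y' ≤ 4 * (r / 4) := by
          rw [dist_comm]
          nlinarith [hy'.le]
      _ ≤ 2 * (r / 2) := by linarith
  · refine le_trans (eCost_segment hUo (by linarith) hball2 hd2) ?_
    apply ENNReal.ofReal_le_ofReal
    rw [div_le_iff₀ (by linarith : (0:ℝ) < r / 2)]
    calc 4 * dist y' y ≤ 4 * (r / 4) := by nlinarith [hy'.le]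
      _ ≤ 2 * (r / 2) := by linarith

lemma dCost_lt_top {U : Set E} (hUo : IsOpen U) (hUconn : IsPreconnected U)
    {p q : E} (hp : p ∈ U) (hq : q ∈ U) : dCost U p q < ⊤ := by
  set V : Set E := {y | y ∈ U ∧ dCost U p y < ⊤} with hV
  set W : Set E := {y | y ∈ U ∧ ¬ dCost U p y < ⊤} with hW
  have hVopen : IsOpen V := by
    rw [Metric.isOpen_iff]
    intro y hyV
    obtain ⟨r, hr, hrU, hgood⟩ := exists_good_ball hUo hyV.1
    refine ⟨r / 4, by linarith, ?_⟩
    intro y' hy'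
    obtain ⟨hy'U, he1, he2⟩ := hgood y' hy'
    refine ⟨hy'U, ?_⟩
    calc dCost U p y' ≤ dCost U p y + dCost U y y' := dCost_triangle U p y y'
      _ ≤ dCost U p y + eCost U y y' := by gcongr; exact dCost_le_eCost U y y'
      _ < ⊤ := ENNReal.add_lt_top.2 ⟨hyV.2, lt_of_le_of_lt he1 ENNReal.ofReal_lt_top⟩
  have hWopen : IsOpen W := by
    rw [Metric.isOpen_iff]
    intro y hyW
    obtain ⟨r, hr, hrU, hgood⟩ := exists_good_ball hUo hyW.1
    refine ⟨r / 4, by linarith, ?_⟩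
    intro y' hy'
    obtain ⟨hy'U, he1, he2⟩ := hgood y' hy'
    refine ⟨hy'U, ?_⟩
    intro hfin
    apply hyW.2
    calc dCost U p y ≤ dCost U p y' + dCost U y' y := dCost_triangle U p y' y
      _ ≤ dCost U p y' + eCost U y' y := by gcongr; exact dCost_le_eCost U y' y
      _ < ⊤ := ENNReal.add_lt_top.2 ⟨hfin, lt_of_le_of_lt he2 ENNReal.ofReal_lt_top⟩
  have hdisj : Disjoint V W := by
    rw [Set.disjoint_iff]
    rintro y ⟨hyV, hyW⟩
    exact absurd hyV.2 hyW.2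
  have hcover : U ⊆ V ∪ W := by
    intro y hy
    by_cases h : dCost U p y < ⊤
    · exact Or.inl ⟨hy, h⟩
    · exact Or.inr ⟨hy, h⟩
  have hne : (U ∩ V).Nonempty := ⟨p, hp, hp, by rw [dCost_self]; exact ENNReal.zero_lt_top⟩
  have := hUconn.subset_left_of_subset_union hVopen hWopen hdisj hcover hne
  exact (this hq).2

lemma dCost_bdd_on_compact {U : Set E} (hUo : IsOpen U) (hUconn : IsPreconnected U)
    {K : Set E} (hK : IsCompact K) (hKU : K ⊆ U) {z₀ : E} (hz₀ : z₀ ∈ U) :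
    ∃ Cb : ℝ≥0∞, Cb ≠ ⊤ ∧ ∀ x ∈ K, dCost U x z₀ ≤ Cb := by
  rcases K.eq_empty_or_nonempty with rfl | hKne
  · exact ⟨0, by simp, by simp⟩
  have hcover : ∀ y : E, ∃ r : ℝ, y ∈ K → (0 < r ∧ ball y r ⊆ U ∧
      ∀ y' ∈ ball y (r / 4), y' ∈ U ∧ eCost U y y' ≤ ENNReal.ofReal 2 ∧
        eCost U y' y ≤ ENNReal.ofReal 2) := by
    intro y
    by_cases hy : y ∈ K
    · obtain ⟨r, hr, h1, h2⟩ := exists_good_ball hUo (hKU hy)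
      exact ⟨r, fun _ => ⟨hr, h1, h2⟩⟩
    · exact ⟨1, fun h => absurd h hy⟩
  choose R hR using hcover
  have hKcov : K ⊆ ⋃ y ∈ K, ball y (R y / 4) := by
    intro y hy
    exact mem_biUnion hy (mem_ball_self (by linarith [(hR y hy).1]))
  obtain ⟨s, hsK, hsfin, hscov⟩ := hK.elim_finite_subcover_image
    (fun y _ => isOpen_ball) hKcov
  classical
  set F := hsfin.toFinset with hF
  set Cb : ℝ≥0∞ := ENNReal.ofReal 2 + F.sup (fun y => dCost U y z₀) with hCb
  refine ⟨Cb, ?_, ?_⟩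
  · rw [hCb]
    apply ENNReal.add_ne_top.2
    constructor
    · exact ENNReal.ofReal_ne_top
    · rw [← lt_top_iff_ne_top, Finset.sup_lt_iff (by exact ENNReal.zero_lt_top)]
      intro y hyF
      have hyK : y ∈ K := hsK (hsfin.mem_toFinset.1 hyF)
      exact dCost_lt_top hUo hUconn (hKU hyK) hz₀
  · intro x hx
    obtain ⟨y, hys, hxy⟩ := mem_iUnion₂.1 (hscov hx)
    have hyK : y ∈ K := hsK hys
    obtain ⟨hxU, he1, he2⟩ := (hR y hyK).2.2 x hxy
    calc dCost U x z₀ ≤ dCost U x y + dCost U y z₀ := dCost_triangle U x y z₀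
      _ ≤ eCost U x y + dCost U y z₀ := by gcongr; exact dCost_le_eCost U x y
      _ ≤ ENNReal.ofReal 2 + F.sup (fun y => dCost U y z₀) :=
          add_le_add he2 (Finset.le_sup (f := fun y => dCost U y z₀) (hsfin.mem_toFinset.2 hys))
      _ = Cb := hCb.symm

end EH

/-- Earle–Hamilton type fixed point theorem: if `U ⊆ ℂⁿ` is a bounded domain and
`f : U → U` is holomorphic with `f(U)` contained in a compact subset of `U`, then `f` has a
unique fixed point `z₀ ∈ U` and the iterates `fⁿ` converge to the constant `z₀`
uniformly on `U`. -/
theorem holomorphic_contraction_fixed_point {n : ℕ}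
    (U : Set (EuclideanSpace ℂ (Fin n)))
    (hUo : IsOpen U) (hUc : IsConnected U) (hUb : Bornology.IsBounded U)
    (f : EuclideanSpace ℂ (Fin n) → EuclideanSpace ℂ (Fin n))
    (hf : DifferentiableOn ℂ f U) (hmaps : Set.MapsTo f U U)
    (K : Set (EuclideanSpace ℂ (Fin n))) (hK : IsCompact K) (hKU : K ⊆ U)
    (hfK : f '' U ⊆ K) :
    ∃ z₀ ∈ U, f z₀ = z₀ ∧ (∀ z₁ ∈ U, f z₁ = z₁ → z₁ = z₀) ∧
      TendstoUniformlyOn (fun m => f^[m]) (fun _ => z₀) Filter.atTop U := by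
  obtain ⟨u₀, hu₀⟩ := hUc.nonempty
  obtain ⟨δ, hδ, hthick⟩ := hK.exists_thickening_subset_open hUo hKU
  set dK := diam K with hdK_def
  have hdK : ∀ x ∈ K, ∀ y ∈ K, dist x y ≤ dK := fun x hx y hy =>
    dist_le_diam_of_mem hK.isBounded hx hy
  have hdK0 : 0 ≤ dK := diam_nonneg
  set t : ℝ := 1 + δ / (2 * (dK + 1)) with ht_def
  have ht1 : 1 < t := by
    have : 0 < δ / (2 * (dK + 1)) := by positivity
    rw [ht_def]; linarith
  have htpos : 0 < t := by linarith
  obtain ⟨B₀, hB₀⟩ := (isBounded_iff_subset_closedBall 0).1 hK.isBounded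
  set B := max B₀ 0 with hB_def
  have hB : 0 ≤ B := le_max_right _ _
  have hbound : ∀ y ∈ U, ‖f y‖ ≤ B := by
    intro y hy
    have h1 := hB₀ (hfK ⟨y, hy, rfl⟩)
    rw [mem_closedBall, dist_zero_right] at h1
    exact h1.trans (le_max_left _ _)
  set c : ℝ≥0∞ := ENNReal.ofReal t⁻¹ with hc_def
  have hc1 : c < 1 := by
    rw [hc_def, ENNReal.ofReal_lt_one]
    exact inv_lt_one_of_one_lt₀ ht1
  have hcne : c ≠ ⊤ := ENNReal.ofReal_ne_top
  have hcontr : ∀ p q, dCost U (f p) (f q) ≤ c * dCost U p q := fun p q =>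
    dCost_contract hUo hf hmaps hfK hB hbound hδ hthick hdK hdK0 ht_def htpos p q
  have hIter : ∀ (m : ℕ) (p q : EuclideanSpace ℂ (Fin n)),
      dCost U (f^[m] p) (f^[m] q) ≤ c ^ m * dCost U p q := by
    intro m
    induction m with
    | zero => intro p q; simp
    | succ m ih =>
      intro p q
      rw [Function.iterate_succ_apply', Function.iterate_succ_apply']
      calc dCost U (f (f^[m] p)) (f (f^[m] q)) ≤ c * dCost U (f^[m] p) (f^[m] q) := hcontr _ _
        _ ≤ c * (c ^ m * dCost U p q) := mul_le_mul_right (ih p q) c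
        _ = c ^ (m + 1) * dCost U p q := by ring
  set D1 : ℝ≥0∞ := ENNReal.ofReal (diam U + 1) with hD1
  have hD1pos : (0:ℝ) < diam U + 1 := by positivity
  have hdistle : ∀ p q : EuclideanSpace ℂ (Fin n),
      ENNReal.ofReal (dist p q) ≤ D1 * dCost U p q := by
    intro p q
    have h1 := dCost_lower (U := U) hUb p q
    calc ENNReal.ofReal (dist p q)
        = D1 * ENNReal.ofReal (dist p q / (diam U + 1)) := by
          rw [hD1, ← ENNReal.ofReal_mul hD1pos.le]
          congr 1
          field_simp
      _ ≤ D1 * dCost U p q := mul_le_mul_right h1 _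
  -- the iterates of u₀
  set x : ℕ → EuclideanSpace ℂ (Fin n) := fun m => f^[m + 1] u₀ with hx_def
  have hxU : ∀ m, f^[m] u₀ ∈ U := fun m => (hmaps.iterate m) hu₀
  have hxK : ∀ m, x m ∈ K := by
    intro m
    rw [hx_def]
    simp only
    rw [Function.iterate_succ_apply']
    exact hfK ⟨_, hxU m, rfl⟩
  have hfu₀U : f u₀ ∈ U := hmaps hu₀
  have hffu₀U : f (f u₀) ∈ U := hmaps hfu₀U
  set A := D1 * dCost U (f u₀) (f (f u₀)) with hA_def
  have hAne : A ≠ ⊤ := ENNReal.mul_ne_top ENNReal.ofReal_ne_top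
    (dCost_lt_top hUo hUc.isPreconnected hfu₀U hffu₀U).ne
  have hxm1 : ∀ m, x m = f^[m] (f u₀) := by
    intro m
    rw [hx_def]
    simp only
    rw [Function.iterate_succ_apply]
  have hxm2 : ∀ m, x (m + 1) = f^[m] (f (f u₀)) := by
    intro m
    rw [hx_def]
    simp only
    rw [Function.iterate_succ_apply, Function.iterate_succ_apply]
  have hgeo : ∀ m, dist (x m) (x (m + 1)) ≤ A.toReal * (t⁻¹) ^ m := by
    intro m
    have h1 : ENNReal.ofReal (dist (x m) (x (m + 1))) ≤ A * c ^ m := by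
      calc ENNReal.ofReal (dist (x m) (x (m + 1)))
          ≤ D1 * dCost U (x m) (x (m + 1)) := hdistle _ _
        _ = D1 * dCost U (f^[m] (f u₀)) (f^[m] (f (f u₀))) := by rw [hxm1, hxm2]
        _ ≤ D1 * (c ^ m * dCost U (f u₀) (f (f u₀))) := mul_le_mul_right (hIter m _ _) _
        _ = A * c ^ m := by rw [hA_def]; ring
    have hfin : A * c ^ m ≠ ⊤ := ENNReal.mul_ne_top hAne (ENNReal.pow_ne_top hcne)
    have h2 := ENNReal.toReal_mono hfin h1
    rw [ENNReal.toReal_ofReal dist_nonneg] at h2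
    calc dist (x m) (x (m + 1)) ≤ (A * c ^ m).toReal := h2
      _ = A.toReal * (t⁻¹) ^ m := by
          rw [ENNReal.toReal_mul, ENNReal.toReal_pow, hc_def,
            ENNReal.toReal_ofReal (by positivity)]
  have hcauchy : CauchySeq x :=
    cauchySeq_of_le_geometric t⁻¹ A.toReal (by
      rw [inv_lt_one_iff₀]; right; exact ht1) hgeo
  obtain ⟨z₀, hz₀t⟩ := cauchySeq_tendsto_of_complete hcauchy
  have hz₀K : z₀ ∈ K := hK.isClosed.mem_of_tendsto hz₀t (Filter.Eventually.of_forall hxK)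
  have hz₀U : z₀ ∈ U := hKU hz₀K
  have hfix : f z₀ = z₀ := by
    have hcontAt : ContinuousAt f z₀ :=
      (hf.differentiableAt (hUo.mem_nhds hz₀U)).continuousAt
    have h1 : Filter.Tendsto (fun m => f (x m)) Filter.atTop (nhds (f z₀)) :=
      hcontAt.tendsto.comp hz₀t
    have h2 : (fun m => f (x m)) = fun m => x (m + 1) := by
      funext m
      rw [hx_def]
      simp only
      rw [← Function.iterate_succ_apply' f (m + 1) u₀]
    rw [h2] at h1
    have h3 : Filter.Tendsto (fun m => x (m + 1)) Filter.atTop (nhds z₀) :=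
      hz₀t.comp (Filter.tendsto_add_atTop_nat 1)
    exact tendsto_nhds_unique h1 h3
  have hiterfix : ∀ k : ℕ, f^[k] z₀ = z₀ := fun k => Function.iterate_fixed hfix k
  -- uniqueness
  have huniq : ∀ z₁ ∈ U, f z₁ = z₁ → z₁ = z₀ := by
    intro z₁ hz₁ hfix₁
    have ha_fin : dCost U z₁ z₀ ≠ ⊤ := (dCost_lt_top hUo hUc.isPreconnected hz₁ hz₀U).ne
    have ha : dCost U z₁ z₀ ≤ c * dCost U z₁ z₀ := by
      have h1 := hcontr z₁ z₀
      rwa [hfix₁, hfix] at h1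
    have hzero : dCost U z₁ z₀ = 0 := by
      by_contra h0
      have h5 : c * dCost U z₁ z₀ < 1 * dCost U z₁ z₀ :=
        (ENNReal.mul_lt_mul_iff_left h0 ha_fin).2 hc1
      rw [one_mul] at h5
      exact absurd (lt_of_le_of_lt ha h5) (lt_irrefl _)
    have h6 := hdistle z₁ z₀
    rw [hzero, mul_zero, nonpos_iff_eq_zero, ENNReal.ofReal_eq_zero] at h6
    exact dist_le_zero.1 h6
  -- uniform bound on K
  obtain ⟨Cb, hCbne, hCb⟩ := dCost_bdd_on_compact hUo hUc.isPreconnected hK hKU hz₀U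
  refine ⟨z₀, hz₀U, hfix, huniq, ?_⟩
  rw [Metric.tendstoUniformlyOn_iff]
  intro ε hε
  have hβ : Filter.Tendsto (fun m : ℕ => D1 * Cb * c ^ m) Filter.atTop (nhds 0) := by
    have h0 := ENNReal.tendsto_pow_atTop_nhds_zero_of_lt_one hc1
    have h1 := ENNReal.Tendsto.const_mul (a := D1 * Cb) h0
      (Or.inr (ENNReal.mul_ne_top ENNReal.ofReal_ne_top hCbne))
    simpa using h1
  have hev : ∀ᶠ m in Filter.atTop, D1 * Cb * c ^ m < ENNReal.ofReal ε :=
    hβ.eventually_lt_const (ENNReal.ofReal_pos.2 hε)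
  obtain ⟨N, hN⟩ := Filter.eventually_atTop.1 hev
  rw [Filter.eventually_atTop]
  refine ⟨N + 1, fun m hm z hz => ?_⟩
  obtain ⟨k, rfl⟩ : ∃ k, m = k + 1 := ⟨m - 1, by omega⟩
  have hk : N ≤ k := by omega
  have hfzK : f z ∈ K := hfK ⟨z, hz, rfl⟩
  have key : ENNReal.ofReal (dist (f^[k + 1] z) z₀) ≤ D1 * Cb * c ^ k := by
    calc ENNReal.ofReal (dist (f^[k + 1] z) z₀)
        ≤ D1 * dCost U (f^[k + 1] z) z₀ := hdistle _ _
      _ = D1 * dCost U (f^[k] (f z)) (f^[k] z₀) := by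
          rw [Function.iterate_succ_apply, hiterfix k]
      _ ≤ D1 * (c ^ k * dCost U (f z) z₀) := mul_le_mul_right (hIter k _ _) _
      _ ≤ D1 * (c ^ k * Cb) := by gcongr; exact hCb _ hfzK
      _ = D1 * Cb * c ^ k := by ring
  have hlt := lt_of_le_of_lt key (hN k hk)
  rw [dist_comm]
  exact (ENNReal.ofReal_lt_ofReal_iff hε).1 hlt
end

section
/- Let U be a bounded domain in ℂⁿ and V an open set with f(U) ⊆ V ⊆ cl(V) ⊆ U, where f : U → U is holomorphic. If 0 < c < 1 satisfies F_U^Kob(q, w) ≤ c·F_V^Kob(q, w) for all q ∈ V, w ∈ ℂⁿ, then d_U(f(p), f(q)) ≤ c·d_U(p, q) for all p, q ∈ U, where d_U is the Kobayashi distance on U. -/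
open Set Metric Filter MeasureTheory Topology

variable {n : ℕ} {U W : Set (EuclideanSpace ℂ (Fin n))}

def kobSet (U : Set (EuclideanSpace ℂ (Fin n))) (p v : EuclideanSpace ℂ (Fin n)) : Set ℝ :=
  {r : ℝ | 0 < r ∧ ∃ f : ℂ → EuclideanSpace ℂ (Fin n),
    DifferentiableOn ℂ f (Metric.ball 0 1) ∧ Set.MapsTo f (Metric.ball 0 1) U ∧
    f 0 = p ∧ deriv f 0 = r⁻¹ • v}

lemma kobRoyden_eq (p v : EuclideanSpace ℂ (Fin n)) : kobRoyden U p v = sInf (kobSet U p v) := rfl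

lemma kobSet_bddBelow (p v : EuclideanSpace ℂ (Fin n)) : BddBelow (kobSet U p v) :=
  ⟨0, fun _ hr => hr.1.le⟩

lemma kobRoyden_nonneg (p v : EuclideanSpace ℂ (Fin n)) : 0 ≤ kobRoyden U p v :=
  Real.sInf_nonneg fun _ hr => hr.1.le

lemma mem_kobSet {p : EuclideanSpace ℂ (Fin n)} {ε : ℝ} (hε : 0 < ε)
    (hb : Metric.ball p ε ⊆ U) (v : EuclideanSpace ℂ (Fin n)) :
    (‖v‖ / ε + 1) ∈ kobSet U p v := by
  have hr : 0 < ‖v‖ / ε + 1 := by positivity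
  set r : ℝ := ‖v‖ / ε + 1 with hrdef
  set w : EuclideanSpace ℂ (Fin n) := r⁻¹ • v with hw
  have hwε : ∀ z : ℂ, z ∈ Metric.ball (0:ℂ) 1 → ‖z • w‖ < ε := by
    intro z hz
    rcases eq_or_ne v 0 with hv | hv
    · simp [hw, hv, hε]
    · have hv0 : 0 < ‖v‖ := norm_pos_iff.2 hv
      have hwn : ‖w‖ < ε := by
        have key : ε * r = ‖v‖ + ε := by rw [hrdef]; field_simp
        rw [hw, norm_smul, norm_inv, Real.norm_eq_abs, abs_of_pos hr,
          inv_mul_lt_iff₀ hr]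
        nlinarith [key, hε]

      calc ‖z • w‖ = ‖z‖ * ‖w‖ := norm_smul _ _
      _ ≤ 1 * ‖w‖ := by
        apply mul_le_mul_of_nonneg_right _ (norm_nonneg _)
        simpa using (mem_ball_zero_iff.1 hz).le
      _ < ε := by simpa using hwn
  refine ⟨hr, fun z => p + z • w, ?_, ?_, by simp, ?_⟩
  · exact (differentiableOn_const p).add ((differentiable_fun_id.smul_const w).differentiableOn)
  · intro z hz
    apply hb
    simp only [mem_ball, dist_eq_norm]
    simpa using hwε z hz
  · have h1 : HasDerivAt (fun z : ℂ => p + z • w) ((1:ℂ) • w) 0 :=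
      ((hasDerivAt_id (0:ℂ)).smul_const w).const_add p
    simpa [hw] using h1.deriv

lemma kobRoyden_le {p : EuclideanSpace ℂ (Fin n)} {ε : ℝ} (hε : 0 < ε)
    (hb : Metric.ball p ε ⊆ U) (v : EuclideanSpace ℂ (Fin n)) :
    kobRoyden U p v ≤ ‖v‖ / ε + 1 :=
  csInf_le (kobSet_bddBelow p v) (mem_kobSet hε hb v)

lemma kobSet_nonempty (hUo : IsOpen U) {p : EuclideanSpace ℂ (Fin n)} (hp : p ∈ U)
    (v : EuclideanSpace ℂ (Fin n)) : (kobSet U p v).Nonempty := by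
  obtain ⟨ε, hε, hb⟩ := Metric.isOpen_iff.1 hUo p hp
  exact ⟨_, mem_kobSet hε hb v⟩

/-- Decreasing property of the Kobayashi-Royden metric under holomorphic maps. -/
lemma kobRoyden_comp (hUo : IsOpen U) {f : EuclideanSpace ℂ (Fin n) → EuclideanSpace ℂ (Fin n)}
    (hf : DifferentiableOn ℂ f U) (hW : f '' U ⊆ W) {x : EuclideanSpace ℂ (Fin n)} (hx : x ∈ U)
    (v : EuclideanSpace ℂ (Fin n)) :
    kobRoyden W (f x) (fderiv ℂ f x v) ≤ kobRoyden U x v := by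
  apply csInf_le_csInf (kobSet_bddBelow _ _) (kobSet_nonempty hUo hx v)
  rintro r ⟨hr, φ, hφd, hφm, hφ0, hφ'⟩
  have h0 : (0:ℂ) ∈ Metric.ball (0:ℂ) 1 := by simp
  have hφat : DifferentiableAt ℂ φ 0 := hφd.differentiableAt (isOpen_ball.mem_nhds h0)
  have hfat : DifferentiableAt ℂ f x := hf.differentiableAt (hUo.mem_nhds hx)
  refine ⟨hr, f ∘ φ, hf.comp hφd hφm, ?_, by simp [Function.comp, hφ0], ?_⟩
  · exact fun z hz => hW ⟨φ z, hφm hz, rfl⟩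
  · have hc : HasDerivAt (f ∘ φ) (fderiv ℂ f x (deriv φ 0)) 0 := by
      have hfat' : HasFDerivAt f (fderiv ℂ f x) (φ 0) := hφ0.symm ▸ hfat.hasFDerivAt
      exact hfat'.comp_hasDerivAt 0 hφat.hasDerivAt
    rw [hc.deriv, hφ']
    exact ContinuousLinearMap.map_smul_of_tower _ _ _

/-- Upper semicontinuity of the Kobayashi-Royden metric at points of `U`. -/
lemma kobRoyden_usc (hUo : IsOpen U) {p v : EuclideanSpace ℂ (Fin n)} (hp : p ∈ U)
    {y : ℝ} (hy : kobRoyden U p v < y) :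
    ∀ᶠ x : EuclideanSpace ℂ (Fin n) × EuclideanSpace ℂ (Fin n) in 𝓝 (p, v),
      kobRoyden U x.1 x.2 < y := by
  obtain ⟨r, hrmem, hry⟩ := exists_lt_of_csInf_lt (kobSet_nonempty hUo hp v) hy
  obtain ⟨hr0, φ, hφd, hφm, hφ0, hφ'⟩ := hrmem
  have hy0 : 0 < y := hr0.trans hry
  set a : ℝ := (r / y + 1) / 2 with ha
  have hry1 : r / y < 1 := (div_lt_one hy0).2 hry
  have ha0 : 0 < a := by positivity
  have ha1 : a < 1 := by rw [ha]; linarith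
  have hra : r / a < y := by
    rw [div_lt_iff₀ ha0, ha]
    have : 0 < r / y := by positivity
    nlinarith [(div_mul_cancel₀ r hy0.ne' : r / y * y = r)]
  have hra0 : 0 < r / a := by positivity
  -- compact image
  have hsub : Metric.closedBall (0:ℂ) a ⊆ Metric.ball (0:ℂ) 1 :=
    (Metric.closedBall_subset_ball ha1)
  set K : Set (EuclideanSpace ℂ (Fin n)) := φ '' Metric.closedBall 0 a with hK
  have hKc : IsCompact K :=
    (isCompact_closedBall _ _).image_of_continuousOn (hφd.continuousOn.mono hsub)
  have hKU : K ⊆ U := by rintro _ ⟨z, hz, rfl⟩; exact hφm (hsub hz)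
  obtain ⟨ε, hε0, hεK⟩ := hKc.exists_thickening_subset_open hUo hKU
  have hball : ∀ x ∈ K, Metric.ball x ε ⊆ U := by
    intro x hx z hz
    exact hεK (Metric.mem_thickening_iff.2 ⟨x, hx, by rwa [mem_ball] at hz⟩)
  -- the eventually
  have hmem : (Metric.ball p (ε/2) ×ˢ Metric.ball v ((r/a) * (ε/2))) ∈ 𝓝 (p, v) :=
    prod_mem_nhds (Metric.ball_mem_nhds _ (by positivity)) (Metric.ball_mem_nhds _ (by positivity))
  filter_upwards [hmem]
  rintro ⟨p', v'⟩ ⟨hp', hv'⟩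
  simp only [mem_ball, dist_eq_norm] at hp' hv'
  set w : EuclideanSpace ℂ (Fin n) := (a/r) • (v' - v) with hwdef
  have hwn : ‖w‖ < ε/2 := by
    rw [hwdef, norm_smul, Real.norm_eq_abs, abs_of_pos (by positivity : (0:ℝ) < a/r)]
    calc a/r * ‖v' - v‖ < a/r * ((r/a) * (ε/2)) :=
          mul_lt_mul_of_pos_left hv' (by positivity)
    _ = ε/2 := by field_simp
  set ψ : ℂ → EuclideanSpace ℂ (Fin n) :=
    fun z => φ ((a:ℂ) * z) + ((p' - p) + z • w) with hψ
  have hmapsin : ∀ z : ℂ, z ∈ Metric.ball (0:ℂ) 1 → (a:ℂ) * z ∈ Metric.closedBall (0:ℂ) a := by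
    intro z hz
    rw [mem_closedBall, dist_zero_right, norm_mul, Complex.norm_real,
      Real.norm_eq_abs, abs_of_pos ha0]
    nlinarith [mem_ball_zero_iff.1 hz, ha0.le, norm_nonneg z]
  refine lt_of_le_of_lt (csInf_le (kobSet_bddBelow _ _) ?_) hra
  refine ⟨hra0, ψ, ?_, ?_, ?_, ?_⟩
  · apply DifferentiableOn.add
    · refine DifferentiableOn.comp (hφd.mono hsub) ?_ ?_
      · exact ((differentiable_fun_id.const_mul _).differentiableOn)
      · exact fun z hz => hmapsin z hz
    · exact ((differentiable_const _).add (differentiable_fun_id.smul_const w)).differentiableOn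
  · intro z hz
    have h1 : φ ((a:ℂ) * z) ∈ K := ⟨_, hmapsin z hz, rfl⟩
    apply hball _ h1
    rw [mem_ball, dist_eq_norm, hψ]
    have : φ ((a:ℂ)*z) + ((p' - p) + z • w) - φ ((a:ℂ)*z) = (p' - p) + z • w := by abel
    rw [this]
    calc ‖(p' - p) + z • w‖ ≤ ‖p' - p‖ + ‖z • w‖ := norm_add_le _ _
    _ < ε/2 + ε/2 := by
        apply add_lt_add hp'
        calc ‖z • w‖ = ‖z‖ * ‖w‖ := norm_smul _ _
        _ ≤ 1 * ‖w‖ := mul_le_mul_of_nonneg_right (mem_ball_zero_iff.1 hz).le (norm_nonneg _)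
        _ < ε/2 := by simpa using hwn
    _ = ε := by ring
  · rw [hψ]; simp [hφ0]
  · have h0 : (0:ℂ) ∈ Metric.ball (0:ℂ) 1 := by simp
    have hφat : DifferentiableAt ℂ φ 0 := hφd.differentiableAt (isOpen_ball.mem_nhds h0)
    have h1 : HasDerivAt (fun z : ℂ => φ ((a:ℂ) * z)) ((a:ℂ) • deriv φ 0) 0 := by
      have hin : HasDerivAt (fun z : ℂ => (a:ℂ) * z) (a:ℂ) 0 := by
        simpa using (hasDerivAt_id (0:ℂ)).const_mul (a:ℂ)
      have hg : HasDerivAt φ (deriv φ 0) ((a:ℂ) * 0) := by simpa using hφat.hasDerivAt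
      have := HasDerivAt.scomp (x := (0:ℂ)) hg hin
      exact this
    have h2 : HasDerivAt (fun z : ℂ => (p' - p) + z • w) ((1:ℂ) • w) 0 :=
      ((hasDerivAt_id (0:ℂ)).smul_const w).const_add _
    have h3 : HasDerivAt ψ ((a:ℂ) • deriv φ 0 + (1:ℂ) • w) 0 := h1.add h2
    rw [h3.deriv, hφ', hwdef]
    have hinv : (r/a)⁻¹ = a * r⁻¹ := by rw [inv_div, div_eq_mul_inv]
    rw [hinv, one_smul, Complex.coe_smul, div_eq_mul_inv a r]
    module

/-- `γ : [0,1] → ℂⁿ` is piecewise `C¹`: continuous, and `C¹` on each interval of a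
partition `0 = t₀ < t₁ < ⋯ < t_N = 1`. -/
def PiecewiseC1 {n : ℕ} (γ : ℝ → EuclideanSpace ℂ (Fin n)) : Prop :=
  ContinuousOn γ (Set.Icc 0 1) ∧ ∃ (N : ℕ) (t : ℕ → ℝ), t 0 = 0 ∧ t N = 1 ∧
    (∀ i < N, t i < t (i + 1)) ∧ ∀ i < N, ContDiffOn ℝ 1 γ (Set.Icc (t i) (t (i + 1)))

lemma part_mono {t : ℕ → ℝ} {N : ℕ} (hinc : ∀ i < N, t i < t (i+1)) :
    ∀ j ≤ N, ∀ i ≤ j, t i ≤ t j := by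
  intro j
  induction j with
  | zero => intro _ i hi; simp [Nat.le_zero.1 hi]
  | succ j ih =>
    intro hj i hi
    by_cases h : i = j + 1
    · rw [h]
    · exact (ih (by omega) i (by omega)).trans (hinc j (by omega)).le

lemma part_sub {t : ℕ → ℝ} {N : ℕ} (ht0 : t 0 = 0) (htN : t N = 1)
    (hinc : ∀ i < N, t i < t (i+1)) :
    ∀ i < N, Icc (t i) (t (i + 1)) ⊆ Icc (0:ℝ) 1 := by
  intro i hi
  apply Icc_subset_Icc
  · rw [← ht0]; exact part_mono hinc i hi.le 0 (Nat.zero_le _)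
  · rw [← htN]; exact part_mono hinc N le_rfl (i+1) hi

lemma part_cover {t : ℕ → ℝ} {N : ℕ} (ht0 : t 0 = 0) (htN : t N = 1)
    (hinc : ∀ i < N, t i < t (i+1)) :
    Icc (0:ℝ) 1 ⊆ (⋃ i ∈ Finset.range N, Ioo (t i) (t (i+1))) ∪ (t '' Set.Iic N) := by
  intro x hx
  by_cases himg : x ∈ t '' Set.Iic N
  · exact Or.inr himg
  left
  have hx0 : 0 < x := by
    rcases eq_or_lt_of_le hx.1 with h | h
    · exact absurd ⟨0, by simp, by rw [ht0, ← h]⟩ himg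
    · exact h
  have hx1 : x < 1 := by
    rcases eq_or_lt_of_le hx.2 with h | h
    · exact absurd ⟨N, by simp, by rw [htN, h]⟩ himg
    · exact h
  set A : Finset ℕ := (Finset.range (N+1)).filter (fun i => t i < x) with hA
  have hA0 : 0 ∈ A := by
    simp [hA, Finset.mem_filter, ht0, hx0]
  have hAne : A.Nonempty := ⟨0, hA0⟩
  set i := A.max' hAne with hidef
  have hiA : i ∈ A := A.max'_mem hAne
  have hiN : i ≤ N := by
    have := (Finset.mem_filter.1 hiA).1
    simpa [Nat.lt_succ_iff] using this
  have hti : t i < x := (Finset.mem_filter.1 hiA).2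
  have hiltN : i < N := by
    rcases Nat.lt_or_ge i N with h | h
    · exact h
    · exfalso
      have : i = N := le_antisymm hiN h
      rw [this, htN] at hti; linarith
  have hxlt : x < t (i+1) := by
    by_contra h
    push_neg at h
    rcases eq_or_lt_of_le h with h' | h'
    · exact himg ⟨i+1, by simp [Set.mem_Iic]; omega, h'⟩
    · have hmem : i + 1 ∈ A := Finset.mem_filter.2 ⟨by simp only [Finset.mem_range]; omega, h'⟩
      have := A.le_max' _ hmem
      omega
  exact Set.mem_biUnion (Finset.mem_range.2 hiltN) (⟨hti, hxlt⟩ : x ∈ Ioo (t i) (t (i+1)))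

lemma part_null {t : ℕ → ℝ} {N : ℕ} (ht0 : t 0 = 0) (htN : t N = 1)
    (hinc : ∀ i < N, t i < t (i+1)) :
    ∀ᵐ x ∂(volume.restrict (Icc (0:ℝ) 1)),
      x ∈ ⋃ i ∈ Finset.range N, Ioo (t i) (t (i+1)) := by
  have h0 : volume (t '' Set.Iic N) = 0 := ((Set.finite_Iic N).image t).measure_zero _
  rw [ae_restrict_iff' measurableSet_Icc]
  rw [ae_iff]
  refine measure_mono_null ?_ h0
  intro x hx
  simp only [Set.mem_setOf_eq] at hx
  push_neg at hx
  rcases part_cover ht0 htN hinc hx.1 with h | h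
  · exact absurd h hx.2
  · exact h

lemma piecewiseC1_ae_diff {γ : ℝ → EuclideanSpace ℂ (Fin n)} (hγ : PiecewiseC1 γ) :
    ∀ᵐ x ∂(volume.restrict (Icc (0:ℝ) 1)), DifferentiableAt ℝ γ x := by
  obtain ⟨hcont, N, t, ht0, htN, hinc, hC1⟩ := hγ
  filter_upwards [part_null ht0 htN hinc] with x hx
  simp only [Set.mem_iUnion, Finset.mem_range] at hx
  obtain ⟨i, hi, hxi⟩ := hx
  have hIcc : Icc (t i) (t (i+1)) ∈ 𝓝 x := Icc_mem_nhds hxi.1 hxi.2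
  exact (((hC1 i hi).differentiableOn one_ne_zero) x (Ioo_subset_Icc_self hxi)).differentiableAt hIcc

lemma kob_integrand_integrable (hUo : IsOpen U) {γ : ℝ → EuclideanSpace ℂ (Fin n)}
    (hγ : PiecewiseC1 γ) (hm : MapsTo γ (Icc 0 1) U) :
    IntervalIntegrable (fun x => kobRoyden U (γ x) (deriv γ x)) volume 0 1 := by
  obtain ⟨hcont, N, t, ht0, htN, hinc, hC1⟩ := hγ
  set g : ℝ → ℝ := fun x => kobRoyden U (γ x) (deriv γ x) with hg
  set S : Set ℝ := ⋃ i ∈ Finset.range N, Ioo (t i) (t (i+1)) with hS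
  have hSo : IsOpen S := isOpen_biUnion fun _ _ => isOpen_Ioo
  have hsub := part_sub ht0 htN hinc
  -- identification of deriv with derivWithin on pieces
  have hderiv : ∀ i < N, ∀ x ∈ Ioo (t i) (t (i+1)),
      deriv γ x = derivWithin γ (Icc (t i) (t (i+1))) x := by
    intro i hi x hx
    exact (derivWithin_of_mem_nhds (Icc_mem_nhds hx.1 hx.2)).symm
  have hdc : ∀ i, i < N → ContinuousOn (derivWithin γ (Icc (t i) (t (i+1))))
      (Icc (t i) (t (i+1))) :=
    fun i hi => (hC1 i hi).continuousOn_derivWithin (uniqueDiffOn_Icc (hinc i hi)) le_rfl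
  -- bounds on derivatives
  have hCb : ∀ i, ∃ C, ∀ x ∈ Icc (t i) (t (i+1)), i < N →
      ‖derivWithin γ (Icc (t i) (t (i+1))) x‖ ≤ C := by
    intro i
    by_cases hi : i < N
    · obtain ⟨C, hC⟩ := isCompact_Icc.exists_bound_of_continuousOn (hdc i hi)
      exact ⟨C, fun x hx _ => hC x hx⟩
    · exact ⟨0, fun x _ h => absurd h hi⟩
  choose C hC using hCb
  set D : ℝ := ∑ i ∈ Finset.range N, max (C i) 0 with hD
  have hCD : ∀ i < N, C i ≤ D := fun i hi =>
    (le_max_left _ _).trans (Finset.single_le_sum (f := fun i => max (C i) 0)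
      (fun j _ => le_max_right _ _) (Finset.mem_range.2 hi))
  -- uniform ball radius
  have hKc : IsCompact (γ '' Icc 0 1) := isCompact_Icc.image_of_continuousOn hcont
  obtain ⟨ε, hε0, hεK⟩ := hKc.exists_thickening_subset_open hUo (image_subset_iff.2 hm)
  have hball : ∀ x ∈ Icc (0:ℝ) 1, Metric.ball (γ x) ε ⊆ U := by
    intro x hx z hz
    exact hεK (Metric.mem_thickening_iff.2 ⟨γ x, ⟨x, hx, rfl⟩, by rwa [mem_ball] at hz⟩)
  set M : ℝ := D / ε + 1 with hM
  have hgM : ∀ x ∈ S, g x ≤ M := by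
    intro x hxS
    simp only [hS, Set.mem_iUnion, Finset.mem_range] at hxS
    obtain ⟨i, hi, hxi⟩ := hxS
    have hxIcc : x ∈ Icc (t i) (t (i+1)) := Ioo_subset_Icc_self hxi
    have hx01 : x ∈ Icc (0:ℝ) 1 := hsub i hi hxIcc
    calc g x ≤ ‖deriv γ x‖ / ε + 1 := kobRoyden_le hε0 (hball x hx01) _
    _ ≤ M := by
        rw [hM]
        have h1 : ‖deriv γ x‖ ≤ D := by
          rw [hderiv i hi x hxi]
          exact (hC i x hxIcc hi).trans (hCD i hi)
        have h2 : ‖deriv γ x‖ / ε ≤ D / ε := by gcongr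
        linarith
  -- upper semicontinuity of g on S
  have husc : ∀ x ∈ S, ∀ y : ℝ, g x < y → ∀ᶠ s in 𝓝 x, g s < y := by
    intro x hxS y hxy
    simp only [hS, Set.mem_iUnion, Finset.mem_range] at hxS
    obtain ⟨i, hi, hxi⟩ := hxS
    have hxIcc : x ∈ Icc (t i) (t (i+1)) := Ioo_subset_Icc_self hxi
    have hnhds : Icc (t i) (t (i+1)) ∈ 𝓝 x := Icc_mem_nhds hxi.1 hxi.2
    have hγx : γ x ∈ U := hm (hsub i hi hxIcc)
    set q : ℝ → EuclideanSpace ℂ (Fin n) × EuclideanSpace ℂ (Fin n) :=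
      fun s => (γ s, derivWithin γ (Icc (t i) (t (i+1))) s) with hq
    have hqc : ContinuousAt q x := by
      apply ContinuousAt.prodMk
      · exact ((hC1 i hi).continuousOn.continuousAt hnhds)
      · exact ((hdc i hi).continuousAt hnhds)
    have hgx : kobRoyden U (q x).1 (q x).2 < y := by
      simpa [hq, ← hderiv i hi x hxi] using hxy
    have hev := Filter.Tendsto.eventually hqc (kobRoyden_usc hUo hγx hgx)
    filter_upwards [hev, isOpen_Ioo.mem_nhds hxi] with s hs1 hs2
    rw [hg]
    simp only
    rw [hderiv i hi s hs2]
    exact hs1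
  -- measurability of the indicator
  have hmeas : Measurable (S.indicator g) := by
    apply measurable_of_Iio
    intro y
    have hopen : IsOpen {x | x ∈ S ∧ g x < y} := by
      rw [isOpen_iff_mem_nhds]
      rintro x ⟨hxS, hxy⟩
      exact Filter.inter_mem (hSo.mem_nhds hxS) (husc x hxS y hxy)
    by_cases hy : (0:ℝ) < y
    · have : S.indicator g ⁻¹' Iio y = {x | x ∈ S ∧ g x < y} ∪ Sᶜ := by
        ext x
        by_cases hx : x ∈ S <;>
          simp [Set.indicator_of_mem, Set.indicator_of_notMem, hx, hy]
      rw [this]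
      exact hopen.measurableSet.union hSo.measurableSet.compl
    · have : S.indicator g ⁻¹' Iio y = {x | x ∈ S ∧ g x < y} := by
        ext x
        by_cases hx : x ∈ S <;>
          simp [Set.indicator_of_mem, Set.indicator_of_notMem, hx, hy]
      rw [this]
      exact hopen.measurableSet
  have haeS : ∀ᵐ x ∂(volume.restrict (Icc (0:ℝ) 1)), x ∈ S := part_null ht0 htN hinc
  have hcongr : g =ᵐ[volume.restrict (Icc (0:ℝ) 1)] S.indicator g :=
    haeS.mono fun x hx => (Set.indicator_of_mem hx g).symm
  have hint : Integrable (S.indicator g) (volume.restrict (Icc (0:ℝ) 1)) := by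
    apply Integrable.mono' (integrable_const (max M 0)) hmeas.aestronglyMeasurable
    apply ae_of_all
    intro x
    by_cases hx : x ∈ S
    · rw [Set.indicator_of_mem hx, Real.norm_eq_abs, abs_of_nonneg (kobRoyden_nonneg _ _)]
      exact (hgM x hx).trans (le_max_left _ _)
    · rw [Set.indicator_of_notMem hx]
      simp
  rw [intervalIntegrable_iff_integrableOn_Icc_of_le (by norm_num : (0:ℝ) ≤ 1)]
  exact (hint.congr hcongr.symm)

/-- A holomorphic function on an open subset of `ℂⁿ` has continuous derivative. -/
lemma holo_continuousOn_fderiv (hUo : IsOpen U)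
    {f : EuclideanSpace ℂ (Fin n) → EuclideanSpace ℂ (Fin n)}
    (hf : DifferentiableOn ℂ f U) : ContinuousOn (fderiv ℂ f) U := by
  intro x₀ hx₀
  apply ContinuousAt.continuousWithinAt
  obtain ⟨r, hr0, hrU⟩ := Metric.isOpen_iff.1 hUo x₀ hx₀
  set R : ℝ := r / 3 with hRdef
  have hR0 : 0 < R := by positivity
  have hcb : Metric.closedBall x₀ (2*R) ⊆ U := fun z hz => hrU (by
    rw [mem_ball]
    rw [Metric.mem_closedBall] at hz
    linarith)
  have hKc : IsCompact (Metric.closedBall x₀ (2*R)) := isCompact_closedBall _ _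
  have hfu : UniformContinuousOn f (Metric.closedBall x₀ (2*R)) :=
    hKc.uniformContinuousOn_of_continuous (hf.continuousOn.mono hcb)
  rw [Metric.continuousAt_iff]
  intro ε hε0
  set η : ℝ := R * ε / 8 with hηdef
  have hη0 : 0 < η := by positivity
  obtain ⟨δ, hδ0, hδ⟩ := Metric.uniformContinuousOn_iff.1 hfu η hη0
  refine ⟨min δ R, lt_min hδ0 hR0, ?_⟩
  intro x1 hx1
  have hx1δ : dist x1 x₀ < δ := hx1.trans_le (min_le_left _ _)
  have hx1R : dist x1 x₀ ≤ R := (hx1.trans_le (min_le_right _ _)).le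
  have hx0K : x₀ ∈ Metric.closedBall x₀ (2*R) := Metric.mem_closedBall_self (by positivity)
  have hmemK : ∀ (xa : EuclideanSpace ℂ (Fin n)), dist xa x₀ ≤ R → ∀ (z : ℂ)
      (v : EuclideanSpace ℂ (Fin n)), ‖z • v‖ ≤ R →
      xa + z • v ∈ Metric.closedBall x₀ (2*R) := by
    intro xa ha z v hzv
    rw [Metric.mem_closedBall]
    calc dist (xa + z • v) x₀ ≤ dist (xa + z • v) xa + dist xa x₀ := dist_triangle _ _ _
    _ ≤ ‖z • v‖ + R := by
        rw [dist_eq_norm, add_sub_cancel_left]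
        exact add_le_add le_rfl ha
    _ ≤ 2*R := by linarith
  -- key pointwise estimate
  have key : ∀ v : EuclideanSpace ℂ (Fin n),
      ‖(fderiv ℂ f x1 - fderiv ℂ f x₀) v‖ ≤ 2 * η / R * ‖v‖ := by
    intro v
    rcases eq_or_ne v 0 with hv | hv
    · simp [hv]
    have hv0 : 0 < ‖v‖ := norm_pos_iff.2 hv
    set ρ : ℝ := R / ‖v‖ with hρdef
    have hρ0 : 0 < ρ := by positivity
    set h : ℂ → EuclideanSpace ℂ (Fin n) :=
      fun z => f (x1 + z • v) - f (x₀ + z • v) with hh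
    have hzle : ∀ z : ℂ, z ∈ Metric.ball (0:ℂ) ρ → ‖z • v‖ ≤ R := by
      intro z hz
      rw [norm_smul]
      rw [mem_ball_zero_iff] at hz
      calc ‖z‖ * ‖v‖ ≤ ρ * ‖v‖ := mul_le_mul_of_nonneg_right hz.le (norm_nonneg _)
      _ = R := by rw [hρdef]; field_simp
    have hdiffat : ∀ (xa : EuclideanSpace ℂ (Fin n)), dist xa x₀ ≤ R →
        ∀ z ∈ Metric.ball (0:ℂ) ρ, DifferentiableAt ℂ (fun w : ℂ => f (xa + w • v)) z := by
      intro xa ha z hz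
      have h1 : xa + z • v ∈ U := hcb (hmemK xa ha z v (hzle z hz))
      have h2 : DifferentiableAt ℂ f (xa + z • v) := hf.differentiableAt (hUo.mem_nhds h1)
      exact h2.comp z ((differentiable_fun_id.smul_const v).const_add xa z)
    have hd : DifferentiableOn ℂ h (Metric.ball 0 ρ) := by
      intro z hz
      exact (((hdiffat x1 hx1R z hz).sub (hdiffat x₀ (by simp [hR0.le]) z hz))).differentiableWithinAt
    have hmaps : MapsTo h (Metric.ball 0 ρ) (Metric.ball (h 0) (2*η)) := by
      intro z hz
      rw [mem_ball, dist_eq_norm]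
      simp only [hh, zero_smul, add_zero]
      have hzK1 : x1 + z • v ∈ Metric.closedBall x₀ (2*R) := hmemK x1 hx1R z v (hzle z hz)
      have hzK0 : x₀ + z • v ∈ Metric.closedBall x₀ (2*R) := hmemK x₀ (by simp [hR0.le]) z v (hzle z hz)
      have hx1K : x1 ∈ Metric.closedBall x₀ (2*R) := by
        rw [Metric.mem_closedBall]; linarith
      have hA : dist (f (x1 + z • v)) (f (x₀ + z • v)) < η := by
        apply hδ _ hzK1 _ hzK0
        rw [dist_eq_norm]
        simpa [add_sub_add_right_eq_sub, ← dist_eq_norm] using hx1δ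
      have hB : dist (f x1) (f x₀) < η := hδ _ hx1K _ hx0K hx1δ
      calc ‖(f (x1 + z • v) - f (x₀ + z • v)) - (f x1 - f x₀)‖
          ≤ ‖f (x1 + z • v) - f (x₀ + z • v)‖ + ‖f x1 - f x₀‖ := norm_sub_le _ _
      _ < η + η := by
          rw [dist_eq_norm] at hA hB
          exact add_lt_add hA hB
      _ = 2 * η := by ring
    have hschwarz := Complex.norm_deriv_le_div_of_mapsTo_ball hd (hmaps.mono_right ball_subset_closedBall) hρ0
    -- compute deriv h 0
    have hda : ∀ (xa : EuclideanSpace ℂ (Fin n)), dist xa x₀ ≤ R →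
        HasDerivAt (fun w : ℂ => f (xa + w • v)) (fderiv ℂ f xa v) 0 := by
      intro xa ha
      have h1 : xa + (0:ℂ) • v ∈ U := hcb (hmemK xa ha 0 v (by simp [hR0.le]))
      have h2 : HasFDerivAt f (fderiv ℂ f xa) (xa + (0:ℂ) • v) := by
        have : xa + (0:ℂ) • v = xa := by simp
        rw [this] at h1 ⊢
        exact (hf.differentiableAt (hUo.mem_nhds h1)).hasFDerivAt
      have h3 : HasDerivAt (fun w : ℂ => xa + w • v) ((1:ℂ) • v) 0 :=
        ((hasDerivAt_id (0:ℂ)).smul_const v).const_add xa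
      have := h2.comp_hasDerivAt 0 h3
      rw [one_smul] at this
      exact this
    have hderiv0 : deriv h 0 = fderiv ℂ f x1 v - fderiv ℂ f x₀ v := by
      have := (hda x1 hx1R).sub (hda x₀ (by simp [hR0.le]))
      exact this.deriv
    rw [hderiv0] at hschwarz
    have : 2 * η / ρ = 2 * η / R * ‖v‖ := by
      rw [hρdef]; field_simp
    rw [this] at hschwarz
    simpa using hschwarz
  have hbound : dist (fderiv ℂ f x1) (fderiv ℂ f x₀) ≤ 2 * η / R := by
    rw [dist_eq_norm]
    exact ContinuousLinearMap.opNorm_le_bound _ (by positivity) key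
  calc dist (fderiv ℂ f x1) (fderiv ℂ f x₀) ≤ 2 * η / R := hbound
  _ < ε := by rw [hηdef]; rw [div_lt_iff₀ hR0]; nlinarith

lemma holo_contDiffOn (hUo : IsOpen U)
    {f : EuclideanSpace ℂ (Fin n) → EuclideanSpace ℂ (Fin n)}
    (hf : DifferentiableOn ℂ f U) : ContDiffOn ℝ 1 f U := by
  have h1 : ContDiffOn ℂ ((0 : WithTop ℕ∞) + 1) f U := by
    rw [contDiffOn_succ_iff_fderiv_of_isOpen hUo]
    refine ⟨hf, by simp, ?_⟩
    rw [contDiffOn_zero]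
    exact holo_continuousOn_fderiv hUo hf
  rw [zero_add] at h1
  exact h1.restrict_scalars ℝ

lemma piecewiseC1_const (p : EuclideanSpace ℂ (Fin n)) : PiecewiseC1 (fun _ : ℝ => p) := by
  refine ⟨continuousOn_const, 1, fun i => (i:ℝ), by simp, by simp, ?_, fun i _ => contDiffOn_const⟩
  intro i _
  show ((i:ℕ):ℝ) < (((i+1):ℕ):ℝ)
  exact_mod_cast Nat.lt_succ_self i

lemma piecewiseC1_clamp {γ : ℝ → EuclideanSpace ℂ (Fin n)} (hγ : PiecewiseC1 γ) :
    ∃ γc : ℝ → EuclideanSpace ℂ (Fin n), Continuous γc ∧ EqOn γc γ (Icc 0 1) ∧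
      PiecewiseC1 γc := by
  obtain ⟨hcont, N, t, ht0, htN, hinc, hC1⟩ := hγ
  set proj : ℝ → ℝ := fun s => max 0 (min 1 s) with hproj
  have hprojc : Continuous proj := continuous_const.max (continuous_const.min continuous_id)
  have hmaps : ∀ s, proj s ∈ Icc (0:ℝ) 1 :=
    fun s => ⟨le_max_left _ _, max_le zero_le_one (min_le_left _ _)⟩
  have heq : EqOn (γ ∘ proj) γ (Icc 0 1) := by
    intro s hs
    have : proj s = s := by
      rw [hproj]
      simp only
      rw [min_eq_right hs.2, max_eq_right hs.1]
    simp [Function.comp, this]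
  have hγcc : Continuous (γ ∘ proj) := hcont.comp_continuous hprojc hmaps
  refine ⟨γ ∘ proj, hγcc, heq, hγcc.continuousOn, N, t, ht0, htN, hinc, ?_⟩
  intro i hi
  exact (hC1 i hi).congr fun x hx => heq (part_sub ht0 htN hinc i hi hx)
lemma piecewiseC1_append {γ : ℝ → EuclideanSpace ℂ (Fin n)}
    (hγ : PiecewiseC1 γ) (hm : MapsTo γ (Icc 0 1) U) {y : EuclideanSpace ℂ (Fin n)}
    (hseg : ∀ s ∈ Icc (0:ℝ) 1, γ 1 + s • (y - γ 1) ∈ U) :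
    ∃ γ' : ℝ → EuclideanSpace ℂ (Fin n), PiecewiseC1 γ' ∧ MapsTo γ' (Icc 0 1) U ∧
      γ' 0 = γ 0 ∧ γ' 1 = y := by
  obtain ⟨γc, hγcc, heq, hcont', N, t, ht0, htN, hinc, hC1⟩ := piecewiseC1_clamp hγ
  set x : EuclideanSpace ℂ (Fin n) := γ 1 with hx
  have hγc1 : γc 1 = x := heq ⟨zero_le_one, le_rfl⟩
  set γ' : ℝ → EuclideanSpace ℂ (Fin n) :=
    fun s => if s ≤ 1/2 then γc (2*s) else x + (2*s - 1) • (y - x) with hγ'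
  have hbd : ∀ s : ℝ, s = 1/2 → γc (2*s) = x + (2*s - 1) • (y - x) := by
    rintro s rfl
    norm_num [hγc1]
  have hcγ' : Continuous γ' := by
    apply Continuous.if_le
    · exact hγcc.comp (continuous_const.mul continuous_id)
    · exact continuous_const.add
        (((continuous_const.mul continuous_id).sub continuous_const).smul continuous_const)
    · exact continuous_id
    · exact continuous_const
    · exact hbd
  have htile : ∀ i ≤ N, t i ≤ 1 := by
    intro i hi
    rw [← htN]; exact part_mono hinc N le_rfl i hi
  have htige : ∀ i ≤ N, 0 ≤ t i := by
    intro i hi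
    rw [← ht0]; exact part_mono hinc i hi 0 (Nat.zero_le _)
  set t' : ℕ → ℝ := fun i => if i ≤ N then t i / 2 else 1 with ht'
  refine ⟨γ', ⟨hcγ'.continuousOn, N+1, t', ?_, ?_, ?_, ?_⟩, ?_, ?_, ?_⟩
  · simp [ht', ht0]
  · simp [ht']
  · intro i hi
    by_cases h : i < N
    · have h1 : i ≤ N := h.le
      have h2 : i + 1 ≤ N := h
      simp only [ht', if_pos h1, if_pos h2]
      linarith [hinc i h]
    · have h1 : i = N := by omega
      have hN1 : ¬ (N + 1 ≤ N) := by omega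
      simp only [ht', h1, le_refl, if_pos, if_neg hN1, htN]
      norm_num
  · intro i hi
    by_cases h : i < N
    · have h1 : i ≤ N := h.le
      have h2 : i + 1 ≤ N := h
      simp only [ht', if_pos h1, if_pos h2]
      have hTsub : ∀ s ∈ Icc (t i / 2) (t (i+1) / 2), 2 * s ∈ Icc (t i) (t (i+1)) := by
        intro s hs
        exact ⟨by linarith [hs.1], by linarith [hs.2]⟩
      have hhalf : ∀ s ∈ Icc (t i / 2) (t (i+1) / 2), s ≤ 1/2 := by
        intro s hs
        have := htile (i+1) h2
        linarith [hs.2]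
      have hcd : ContDiffOn ℝ 1 (fun s : ℝ => γc (2*s)) (Icc (t i / 2) (t (i+1) / 2)) := by
        apply (hC1 i h).comp ((contDiff_const.mul contDiff_id).contDiffOn)
        exact hTsub
      refine hcd.congr fun s hs => ?_
      show (if s ≤ 1/2 then γc (2*s) else x + (2*s - 1) • (y - x)) = γc (2*s)
      rw [if_pos (hhalf s hs)]
    · have h1 : i = N := by omega
      have hN1 : ¬ (N + 1 ≤ N) := by omega
      simp only [ht', h1, le_refl, if_pos, if_neg hN1, htN]
      have hcd : ContDiffOn ℝ 1 (fun s : ℝ => x + (2*s - 1) • (y - x))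
          (Icc (1/2 : ℝ) 1) := by
        apply ContDiffOn.add contDiffOn_const
        exact ContDiffOn.smul (((contDiff_const.mul contDiff_id).sub contDiff_const).contDiffOn)
          contDiffOn_const
      refine hcd.congr fun s hs => ?_
      show (if s ≤ 1/2 then γc (2*s) else x + (2*s - 1) • (y - x)) = x + (2*s - 1) • (y - x)
      by_cases hs2 : s ≤ 1/2
      · rw [if_pos hs2]
        exact hbd s (le_antisymm hs2 hs.1)
      · rw [if_neg hs2]
  · intro s hs
    by_cases h : s ≤ 1/2
    · show (if s ≤ 1/2 then γc (2*s) else x + (2*s - 1) • (y - x)) ∈ U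
      rw [if_pos h]
      have h2 : (2*s : ℝ) ∈ Icc (0:ℝ) 1 := ⟨by linarith [hs.1], by linarith⟩
      rw [heq h2]
      exact hm h2
    · show (if s ≤ 1/2 then γc (2*s) else x + (2*s - 1) • (y - x)) ∈ U
      rw [if_neg h]
      exact hseg (2*s - 1) ⟨by linarith, by linarith [hs.2]⟩
  · show (if (0:ℝ) ≤ 1/2 then γc (2*0) else x + (2*0 - 1) • (y - x)) = γ 0
    rw [if_pos (by norm_num : (0:ℝ) ≤ 1/2)]
    rw [show (2:ℝ) * 0 = 0 by ring]
    exact heq ⟨le_rfl, zero_le_one⟩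
  · show (if (1:ℝ) ≤ 1/2 then γc (2*1) else x + (2*1 - 1) • (y - x)) = y
    rw [if_neg (by norm_num : ¬ ((1:ℝ) ≤ 1/2))]
    rw [show (2*(1:ℝ) - 1) = 1 by ring, one_smul]
    abel

lemma exists_pc1_curve (hUo : IsOpen U) (hUc : IsConnected U)
    {p q : EuclideanSpace ℂ (Fin n)} (hp : p ∈ U) (hq : q ∈ U) :
    ∃ γ : ℝ → EuclideanSpace ℂ (Fin n), PiecewiseC1 γ ∧ MapsTo γ (Icc 0 1) U ∧
      γ 0 = p ∧ γ 1 = q := by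
  set A : Set (EuclideanSpace ℂ (Fin n)) :=
    {x | ∃ γ : ℝ → EuclideanSpace ℂ (Fin n), PiecewiseC1 γ ∧ MapsTo γ (Icc 0 1) U ∧
      γ 0 = p ∧ γ 1 = x} with hA
  set u : Set (EuclideanSpace ℂ (Fin n)) := {x | x ∈ U ∧ x ∈ A} with hu
  set v : Set (EuclideanSpace ℂ (Fin n)) := {x | x ∈ U ∧ x ∉ A} with hv
  have huo : IsOpen u := by
    rw [Metric.isOpen_iff]
    rintro x ⟨hxU, γ, hγ, hγm, hγ0, hγ1⟩
    obtain ⟨ε, hε0, hεU⟩ := Metric.isOpen_iff.1 hUo x hxU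
    refine ⟨ε, hε0, ?_⟩
    intro z hz
    refine ⟨hεU hz, ?_⟩
    have hseg : ∀ s ∈ Icc (0:ℝ) 1, γ 1 + s • (z - γ 1) ∈ U := by
      intro s hs
      rw [hγ1]
      exact hεU ((convex_ball x ε).add_smul_sub_mem (mem_ball_self hε0) hz ⟨hs.1, hs.2⟩)
    obtain ⟨γ', h1, h2, h3, h4⟩ := piecewiseC1_append hγ hγm hseg
    exact ⟨γ', h1, h2, h3.trans hγ0, h4⟩
  have hvo : IsOpen v := by
    rw [Metric.isOpen_iff]
    rintro x ⟨hxU, hxA⟩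
    obtain ⟨ε, hε0, hεU⟩ := Metric.isOpen_iff.1 hUo x hxU
    refine ⟨ε, hε0, ?_⟩
    intro z hz
    refine ⟨hεU hz, ?_⟩
    intro hzA
    apply hxA
    obtain ⟨γ, hγ, hγm, hγ0, hγ1⟩ := hzA
    have hseg : ∀ s ∈ Icc (0:ℝ) 1, γ 1 + s • (x - γ 1) ∈ U := by
      intro s hs
      rw [hγ1]
      exact hεU ((convex_ball x ε).add_smul_sub_mem hz (mem_ball_self hε0) ⟨hs.1, hs.2⟩)
    obtain ⟨γ', h1, h2, h3, h4⟩ := piecewiseC1_append hγ hγm hseg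
    exact ⟨γ', h1, h2, h3.trans hγ0, h4⟩
  have hdisj : Disjoint u v := by
    rw [Set.disjoint_left]
    rintro x ⟨_, hxA⟩ ⟨_, hxA'⟩
    exact hxA' hxA
  have hsub : U ⊆ u ∪ v := by
    intro x hx
    by_cases h : x ∈ A
    · exact Or.inl ⟨hx, h⟩
    · exact Or.inr ⟨hx, h⟩
  have hne : (U ∩ u).Nonempty := by
    refine ⟨p, hp, hp, fun _ => p, piecewiseC1_const p, ?_, rfl, rfl⟩
    intro s _
    exact hp
  have := hUc.isPreconnected.subset_left_of_subset_union huo hvo hdisj hsub hne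
  exact (this hq).2

/-- The Kobayashi distance of `U`: the infimum of `∫₀¹ F_U^Kob(γ(t), γ'(t)) dt` over
piecewise `C¹` curves `γ : [0,1] → U` from `p` to `q`. -/
noncomputable def kobDist {n : ℕ} (U : Set (EuclideanSpace ℂ (Fin n)))
    (p q : EuclideanSpace ℂ (Fin n)) : ℝ :=
  sInf {L : ℝ | ∃ γ : ℝ → EuclideanSpace ℂ (Fin n), PiecewiseC1 γ ∧
    Set.MapsTo γ (Set.Icc 0 1) U ∧ γ 0 = p ∧ γ 1 = q ∧
    L = ∫ t in (0:ℝ)..1, kobRoyden U (γ t) (deriv γ t)}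

/-- If `f : U → U` is holomorphic, `f(U) ⊆ V ⊆ cl(V) ⊆ U`, and
`F_U^Kob(q,w) ≤ c·F_V^Kob(q,w)` on `V` for some `0 < c < 1`, then `f` is a strict
contraction of ratio `c` for the Kobayashi distance of `U`. -/
theorem kobDist_contraction {n : ℕ}
    (U V : Set (EuclideanSpace ℂ (Fin n)))
    (hUo : IsOpen U) (hUc : IsConnected U) (hUb : Bornology.IsBounded U) (hVo : IsOpen V)
    (f : EuclideanSpace ℂ (Fin n) → EuclideanSpace ℂ (Fin n))
    (hf : DifferentiableOn ℂ f U) (hmaps : Set.MapsTo f U U)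
    (hfV : f '' U ⊆ V) (hVU : closure V ⊆ U)
    (c : ℝ) (hc0 : 0 < c) (hc1 : c < 1)
    (hcomp : ∀ q ∈ V, ∀ w : EuclideanSpace ℂ (Fin n),
      kobRoyden U q w ≤ c * kobRoyden V q w) :
    ∀ p ∈ U, ∀ q ∈ U, kobDist U (f p) (f q) ≤ c * kobDist U p q := by
  intro p hp q hq
  have hVsubU : V ⊆ U := fun x hx => hVU (subset_closure hx)
  -- pointwise inequality on the infinitesimal metric
  have hpt : ∀ x ∈ U, ∀ v : EuclideanSpace ℂ (Fin n),
      kobRoyden U (f x) (fderiv ℂ f x v) ≤ c * kobRoyden U x v := by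
    intro x hx v
    have h1 : kobRoyden U (f x) (fderiv ℂ f x v) ≤ c * kobRoyden V (f x) (fderiv ℂ f x v) :=
      hcomp (f x) (hfV ⟨x, hx, rfl⟩) _
    have h2 : kobRoyden V (f x) (fderiv ℂ f x v) ≤ kobRoyden U x v :=
      kobRoyden_comp hUo hf hfV hx v
    exact h1.trans (mul_le_mul_of_nonneg_left h2 hc0.le)
  set SU : Set ℝ := {L : ℝ | ∃ γ : ℝ → EuclideanSpace ℂ (Fin n), PiecewiseC1 γ ∧
    Set.MapsTo γ (Set.Icc 0 1) U ∧ γ 0 = p ∧ γ 1 = q ∧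
    L = ∫ t in (0:ℝ)..1, kobRoyden U (γ t) (deriv γ t)} with hSU
  have hSUnonneg : ∀ L ∈ SU, (0:ℝ) ≤ L := by
    rintro L ⟨γ, _, _, _, _, rfl⟩
    exact intervalIntegral.integral_nonneg (by norm_num) fun u _ => kobRoyden_nonneg _ _
  have hne : SU.Nonempty := by
    obtain ⟨γ, h1, h2, h3, h4⟩ := exists_pc1_curve hUo hUc hp hq
    exact ⟨_, γ, h1, h2, h3, h4, rfl⟩
  have hfC1 : ContDiffOn ℝ 1 f U := holo_contDiffOn hUo hf
  have key : ∀ L ∈ SU, kobDist U (f p) (f q) ≤ c * L := by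
    rintro L ⟨γ, hγ, hγm, hγ0, hγ1, rfl⟩
    set δ : ℝ → EuclideanSpace ℂ (Fin n) := fun s => f (γ s) with hδ
    have hδm : MapsTo δ (Icc 0 1) U := fun s hs => hVsubU (hfV ⟨γ s, hγm hs, rfl⟩)
    have hδpc : PiecewiseC1 δ := by
      obtain ⟨hcont, N, t, ht0, htN, hinc, hC1⟩ := id hγ
      exact ⟨hfC1.continuousOn.comp hcont hγm, N, t, ht0, htN, hinc, fun i hi =>
        hfC1.comp (hC1 i hi) fun s hs => hγm (part_sub ht0 htN hinc i hi hs)⟩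
    have hint_h : IntervalIntegrable (fun x => kobRoyden U (γ x) (deriv γ x)) volume 0 1 :=
      kob_integrand_integrable hUo hγ hγm
    have hint_g : IntervalIntegrable (fun x => kobRoyden U (δ x) (deriv δ x)) volume 0 1 :=
      kob_integrand_integrable hUo hδpc hδm
    have hae : (fun x => kobRoyden U (δ x) (deriv δ x)) ≤ᵐ[volume.restrict (Icc (0:ℝ) 1)]
        fun x => c * kobRoyden U (γ x) (deriv γ x) := by
      filter_upwards [piecewiseC1_ae_diff hγ, ae_restrict_mem measurableSet_Icc] with s hsd hsIcc
      have hγsU : γ s ∈ U := hγm hsIcc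
      have hfd : HasFDerivAt f ((fderiv ℂ f (γ s)).restrictScalars ℝ) (γ s) :=
        ((hf.differentiableAt (hUo.mem_nhds hγsU)).hasFDerivAt).restrictScalars ℝ
      have hcd : HasDerivAt δ (fderiv ℂ f (γ s) (deriv γ s)) s := by
        have := hfd.comp_hasDerivAt s hsd.hasDerivAt
        exact this
      rw [hcd.deriv]
      exact hpt (γ s) hγsU (deriv γ s)
    have hmem : (∫ t in (0:ℝ)..1, kobRoyden U (δ t) (deriv δ t)) ∈
        {L : ℝ | ∃ γ : ℝ → EuclideanSpace ℂ (Fin n), PiecewiseC1 γ ∧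
          Set.MapsTo γ (Set.Icc 0 1) U ∧ γ 0 = f p ∧ γ 1 = f q ∧
          L = ∫ t in (0:ℝ)..1, kobRoyden U (γ t) (deriv γ t)} := by
      refine ⟨δ, hδpc, hδm, ?_, ?_, rfl⟩
      · rw [hδ]; simp only; rw [hγ0]
      · rw [hδ]; simp only; rw [hγ1]
    have hbdd : BddBelow {L : ℝ | ∃ γ : ℝ → EuclideanSpace ℂ (Fin n), PiecewiseC1 γ ∧
        Set.MapsTo γ (Set.Icc 0 1) U ∧ γ 0 = f p ∧ γ 1 = f q ∧
        L = ∫ t in (0:ℝ)..1, kobRoyden U (γ t) (deriv γ t)} := by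
      refine ⟨0, ?_⟩
      rintro L ⟨γ', _, _, _, _, rfl⟩
      exact intervalIntegral.integral_nonneg (by norm_num) fun u _ => kobRoyden_nonneg _ _
    have hL' : kobDist U (f p) (f q) ≤ ∫ t in (0:ℝ)..1, kobRoyden U (δ t) (deriv δ t) :=
      csInf_le hbdd hmem
    have hcmp : (∫ t in (0:ℝ)..1, kobRoyden U (δ t) (deriv δ t)) ≤
        ∫ t in (0:ℝ)..1, c * kobRoyden U (γ t) (deriv γ t) :=
      intervalIntegral.integral_mono_ae_restrict (by norm_num) hint_g (hint_h.const_mul c) hae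
    rw [intervalIntegral.integral_const_mul] at hcmp
    exact hL'.trans hcmp
  have hdiv : kobDist U (f p) (f q) / c ≤ sInf SU := by
    apply le_csInf hne
    intro L hL
    rw [div_le_iff₀ hc0, mul_comm]
    exact key L hL
  have : kobDist U (f p) (f q) ≤ sInf SU * c := (div_le_iff₀ hc0).1 hdiv
  rw [mul_comm] at this
  exact this
end
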